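/- arXiv:1807.00026 — 7 statements merged into one kernel-verified Lean document; each statement's English description precedes it below -/
import Mathlib

section
/- Let 0 ≤ α < 1. Let f, g : [-1,1] → ℝ be absolutely continuous functions on [-1,1] lying in L²(-1,1), with f(-1)=f(1)=g(-1)=g(1)=0, ∫_{-1}^1 |x|^α f'(x)² dx < ∞, ∫_{-1}^1 |x|^α g'(x)² dx < ∞, and such that the functions x ↦ |x|^α f'(x) and x ↦ |x|^α g'(x) agree almost everywhere on (-1,1) with absolutely continuous functions F and G on [-1,1] whose derivatives F', G' belong to L²(-1,1). Then ∫_{-1}^1 F'(x) g(x) dx = - ∫_{-1}^1 |x|^α f'(x) g'(x) dx. -/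
open MeasureTheory Set Filter

/-- `u` is absolutely continuous on `[c,d]` with (a.e.) derivative `u'`,
encoded via the fundamental theorem of calculus. -/
def AbsContOnWith (u u' : ℝ → ℝ) (c d : ℝ) : Prop :=
  IntervalIntegrable u' volume c d ∧
    ∀ x ∈ Icc c d, u x = u c + ∫ t in c..x, u' t

/-- Membership in the weakly degenerate weighted Sobolev space `H¹_α(-1,1)`
(for `α ∈ [0,1)`), with explicit derivative witness `u'`:
`u ∈ L²(-1,1)`, `u` is absolutely continuous on `[-1,1]`, `u(-1) = u(1) = 0`,
and `∫_{-1}^1 |x|^α u'(x)² dx < ∞`. -/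
def MemH1Weak (α : ℝ) (u u' : ℝ → ℝ) : Prop :=
  IntegrableOn (fun x => (u x) ^ 2) (Ioo (-1 : ℝ) 1) volume ∧
  AbsContOnWith u u' (-1) 1 ∧
  u (-1) = 0 ∧ u 1 = 0 ∧
  IntegrableOn (fun x => |x| ^ α * (u' x) ^ 2) (Ioo (-1 : ℝ) 1) volume

/-- The flux `x ↦ |x|^α u'(x)` agrees a.e. on `(-1,1)` with an absolutely continuous
function `F` on `[-1,1]` whose derivative `F'` belongs to `L²(-1,1)`. -/
def FluxAC (α : ℝ) (u' F F' : ℝ → ℝ) : Prop :=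
  (∀ᵐ x ∂(volume.restrict (Ioo (-1 : ℝ) 1)), F x = |x| ^ α * u' x) ∧
  AbsContOnWith F F' (-1) 1 ∧
  IntegrableOn (fun x => (F' x) ^ 2) (Ioo (-1 : ℝ) 1) volume

/-- Integration by parts in the weakly degenerate case `0 ≤ α < 1`:
for `f, g ∈ H²_α(-1,1)`, `∫_{-1}^1 (|x|^α f')' g dx = - ∫_{-1}^1 |x|^α f' g' dx`. -/
theorem stmt2 (α : ℝ) (hα0 : 0 ≤ α) (hα1 : α < 1)
    (f f' F F' g g' G G' : ℝ → ℝ)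
    (hf : MemH1Weak α f f') (hF : FluxAC α f' F F')
    (hg : MemH1Weak α g g') (hG : FluxAC α g' G G') :
    ∫ x in Ioo (-1 : ℝ) 1, F' x * g x = - ∫ x in Ioo (-1 : ℝ) 1, |x| ^ α * f' x * g' x := by
  obtain ⟨-, ⟨hg'int, hgrep⟩, hgm1, hg1, -⟩ := hg
  obtain ⟨hFae, ⟨hF'int, hFrep⟩, -⟩ := hF
  set A : Set ℝ := Ioo (-1 : ℝ) 1 with hA
  have hmA : MeasurableSet A := measurableSet_Ioo
  have h11 : (-1 : ℝ) ≤ 1 := by norm_num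
  -- integrability of F', g' on A
  have hF'A : IntegrableOn F' A volume :=
    ((intervalIntegrable_iff_integrableOn_Ioc_of_le h11).1 hF'int).mono_set Ioo_subset_Ioc_self
  have hg'A : IntegrableOn g' A volume :=
    ((intervalIntegrable_iff_integrableOn_Ioc_of_le h11).1 hg'int).mono_set Ioo_subset_Ioc_self
  set u : ℝ → ℝ := A.indicator F' with hu
  set v : ℝ → ℝ := A.indicator g' with hv
  have hui : Integrable u volume := hF'A.integrable_indicator hmA
  have hvi : Integrable v volume := hg'A.integrable_indicator hmA
  -- g value formula
  have hgval : ∀ x ∈ Icc (-1 : ℝ) 1, g x = ∫ t in Ioc (-1 : ℝ) x, g' t := by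
    intro x hx
    rw [hgrep x hx, hgm1, zero_add, intervalIntegral.integral_of_le hx.1]
  have hg'zero : ∫ t in Ioc (-1 : ℝ) 1, g' t = 0 := by
    have := hgval 1 (by constructor <;> norm_num)
    rw [hg1] at this; exact this.symm
  -- F 1 - F t = ∫ t..1 F'
  have hFsub : ∀ t ∈ Icc (-1 : ℝ) 1, F 1 - F t = ∫ x in t..(1:ℝ), F' x := by
    intro t ht
    have hIt : IntervalIntegrable F' volume (-1) t :=
      hF'int.mono_set (uIcc_subset_uIcc left_mem_uIcc (by
        rw [uIcc_of_le h11]; exact ht))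
    rw [hFrep 1 (by constructor <;> norm_num), hFrep t ht]
    have := intervalIntegral.integral_interval_sub_left hF'int hIt
    linarith [this]
  -- the kernel
  set K : ℝ → ℝ → ℝ := fun x t => if t ≤ x then u x * v t else 0 with hK
  have hKint : Integrable (Function.uncurry K) (volume.prod volume) := by
    have h1 : Integrable (fun p : ℝ × ℝ => u p.1 * v p.2) (volume.prod volume) :=
      hui.mul_prod hvi
    have h2 := h1.indicator (measurableSet_le measurable_snd measurable_fst)
    refine h2.congr ?_
    refine Filter.Eventually.of_forall fun p => ?_
    simp only [Function.uncurry, hK, Set.indicator_apply, Set.mem_setOf_eq]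
  have hswap := integral_integral_swap hKint
  -- LHS of swap
  have hleft : (∫ x, ∫ t, K x t) = ∫ x in A, F' x * g x := by
    rw [← integral_indicator hmA]
    congr 1
    funext x
    have hrw : (fun t => K x t) = (Iic x).indicator (fun t => u x * v t) := by
      funext t; simp [hK, Set.indicator_apply, Set.mem_Iic]
    rw [hrw, integral_indicator measurableSet_Iic, integral_const_mul]
    by_cases hx : x ∈ A
    · rw [Set.indicator_of_mem hx, hu, Set.indicator_of_mem hx]
      congr 1
      rw [hv, integral_indicator hmA, Measure.restrict_restrict hmA]
      have hset : A ∩ Iic x = Ioc (-1 : ℝ) x := by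
        ext t
        simp only [hA, Set.mem_inter_iff, Set.mem_Ioo, Set.mem_Iic, Set.mem_Ioc]
        exact ⟨fun ⟨⟨h1, _⟩, h3⟩ => ⟨h1, h3⟩,
          fun ⟨h1, h3⟩ => ⟨⟨h1, lt_of_le_of_lt h3 hx.2⟩, h3⟩⟩
      rw [hset, ← hgval x (Ioo_subset_Icc_self hx)]
    · rw [Set.indicator_of_notMem hx, hu, Set.indicator_of_notMem hx, zero_mul]
  -- RHS of swap
  have hright : (∫ t, ∫ x, K x t) = ∫ t in A, g' t * (F 1 - F t) := by
    rw [← integral_indicator hmA]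
    congr 1
    funext t
    have hrw : (fun x => K x t) = (Ici t).indicator (fun x => u x * v t) := by
      funext x; simp [hK, Set.indicator_apply, Set.mem_Ici]
    rw [hrw, integral_indicator measurableSet_Ici, integral_mul_const]
    by_cases ht : t ∈ A
    · rw [Set.indicator_of_mem ht, hv, Set.indicator_of_mem ht, mul_comm]
      congr 1
      rw [hu, integral_indicator hmA, Measure.restrict_restrict hmA]
      have hset : A ∩ Ici t = Ico t 1 := by
        ext x
        simp only [hA, Set.mem_inter_iff, Set.mem_Ioo, Set.mem_Ici, Set.mem_Ico]
        exact ⟨fun ⟨⟨_, h2⟩, h3⟩ => ⟨h3, h2⟩,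
          fun ⟨h3, h2⟩ => ⟨⟨lt_of_lt_of_le ht.1 h3, h2⟩, h3⟩⟩
      rw [hset, integral_Ico_eq_integral_Ioo, ← integral_Ioc_eq_integral_Ioo,
        ← intervalIntegral.integral_of_le ht.2.le,
        ← hFsub t (Ioo_subset_Icc_self ht)]
    · rw [Set.indicator_of_notMem ht, hv, Set.indicator_of_notMem ht, mul_zero]
  -- continuous representative of F on A
  set P : ℝ → ℝ := fun x => F (-1) + ∫ t in (-1 : ℝ)..x, u t with hP
  have hPcont : Continuous P := by
    exact continuous_const.add (intervalIntegral.continuous_primitive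
      (fun a b => hui.intervalIntegrable) (-1))
  have hPF : ∀ x ∈ A, P x = F x := by
    intro x hx
    show F (-1) + (∫ t in (-1 : ℝ)..x, u t) = F x
    have h1 : (∫ t in (-1 : ℝ)..x, u t) = ∫ t in (-1 : ℝ)..x, F' t := by
      rw [intervalIntegral.integral_of_le hx.1.le, intervalIntegral.integral_of_le hx.1.le,
        hu, integral_indicator hmA, Measure.restrict_restrict hmA,
        Set.inter_eq_self_of_subset_right (fun t ht => Set.mem_Ioo.2 ⟨(Set.mem_Ioc.1 ht).1, lt_of_le_of_lt (Set.mem_Ioc.1 ht).2 hx.2⟩)]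
    rw [h1, ← hFrep x (Ioo_subset_Icc_self hx)]
  have hPFae : (fun x => P x) =ᵐ[volume.restrict A] F :=
    (ae_restrict_iff' hmA).2 (Filter.Eventually.of_forall fun x hx => hPF x hx)
  have hFmeas : AEStronglyMeasurable F (volume.restrict A) :=
    hPcont.aestronglyMeasurable.congr hPFae
  -- integrability of F * g' on A
  obtain ⟨C, hC⟩ : ∃ C, ∀ x ∈ Icc (-1 : ℝ) 1, ‖P x‖ ≤ C :=
    isCompact_Icc.exists_bound_of_continuousOn hPcont.continuousOn
  have hFg'A : IntegrableOn (fun t => F t * g' t) A volume := by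
    refine Integrable.bdd_mul (c := C) hg'A hFmeas ?_
    refine (ae_restrict_iff' hmA).2 (Filter.Eventually.of_forall fun x hx => ?_)
    rw [← hPF x hx]
    exact hC x (Ioo_subset_Icc_self hx)
  -- assemble
  have hsplit : ∫ t in A, g' t * (F 1 - F t)
      = F 1 * (∫ t in A, g' t) - ∫ t in A, F t * g' t := by
    have h1 : IntegrableOn (fun t => F 1 * g' t) A volume := hg'A.const_mul _
    have heq : ∀ t, g' t * (F 1 - F t) = F 1 * g' t - F t * g' t := fun t => by ring
    simp_rw [heq]
    rw [integral_sub h1 hFg'A, integral_const_mul]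
  have hAg' : (∫ t in A, g' t) = 0 := by
    rw [hA, ← integral_Ioc_eq_integral_Ioo]; exact hg'zero
  have hmain : ∫ x in A, F' x * g x = - ∫ t in A, F t * g' t := by
    rw [← hleft, hswap, hright, hsplit, hAg', mul_zero, zero_sub]
  rw [hmain]
  congr 1
  refine integral_congr_ae ?_
  filter_upwards [hFae] with x hx
  rw [hx]
end

section
/- Let 1 ≤ α < 2 and let f : (0,1] → ℝ be locally absolutely continuous with ∫_0^1 x^α f'(x)² dx < ∞, and such that x ↦ x^α f'(x) agrees a.e. on (0,1) with an absolutely continuous function F on [0,1] whose derivative F' lies in L²(0,1). Then F(x) → 0 as x → 0⁺ (i.e. x^α f'(x) tends to 0 at the degeneracy point), and moreover |F(x)| ≤ C √x for all x ∈ (0,1), with C = (∫_0^1 F'(s)² ds)^{1/2}. -/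
open MeasureTheory Set Filter

/-!
By Cauchy–Schwarz, `|F x - F 0| ≤ ‖F'‖₂ √x`, so `F` tends to `F 0` at `0⁺`. On `(0,1)` the
weighted energy `x^α f'²` equals `F² x^(-α)` a.e.; if `F 0 ≠ 0`, then `F²` is bounded below
near `0` and `x^(-α)` would be integrable near `0`, which fails for `α ≥ 1`. Hence `F 0 = 0`.
-/

open Topology

theorem abs_integral_le_sqrt_integral_sq_mul_sqrt {α : Type*} [MeasurableSpace α]
    {μ : Measure α} [IsFiniteMeasure μ] {G : α → ℝ} (hG : MemLp G 2 μ) :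
    |∫ a, G a ∂μ| ≤ √(∫ a, G a ^ 2 ∂μ) * √(μ.real univ) := by
  have holder := integral_mul_le_Lp_mul_Lq_of_nonneg (μ := μ) Real.HolderConjugate.two_two
    (f := fun a => |G a|) (g := fun _ => 1) (.of_forall fun _ => abs_nonneg _)
    (.of_forall fun _ => zero_le_one) (by rw [ENNReal.ofReal_ofNat]; exact hG.abs)
    (by rw [ENNReal.ofReal_ofNat]; exact memLp_const 1)
  simp only [mul_one, one_pow, integral_const, smul_eq_mul, Real.rpow_two, sq_abs,
    ← Real.sqrt_eq_rpow] at holder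
  exact abs_integral_le_integral_abs.trans holder

theorem AbsContOnWith.abs_sub_le_sqrt_mul_sqrt {u u' : ℝ → ℝ} {c d : ℝ}
    (hu : AbsContOnWith u u' c d) (hsq : IntegrableOn (fun s => u' s ^ 2) (Ioo c d))
    {x : ℝ} (hx : x ∈ Icc c d) :
    |u x - u c| ≤ √(∫ s in Ioo c d, u' s ^ 2) * √(x - c) := by
  have hsub : Ioo c x ⊆ Ioo c d := Ioo_subset_Ioo_right hx.2
  have hmeas : AEStronglyMeasurable u' (volume.restrict (Ioo c x)) :=
    (hu.1.1.mono_set (Ioo_subset_Ioc_self.trans (Ioc_subset_Ioc_right hx.2))).aestronglyMeasurable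
  have hmemLp : MemLp u' 2 (volume.restrict (Ioo c x)) :=
    (memLp_two_iff_integrable_sq hmeas).2 (hsq.mono_set hsub)
  rw [hu.2 x hx, add_sub_cancel_left, intervalIntegral.integral_of_le hx.1,
    integral_Ioc_eq_integral_Ioo]
  refine (abs_integral_le_sqrt_integral_sq_mul_sqrt hmemLp).trans ?_
  gcongr
  · exact .of_forall fun _ => sq_nonneg _
  · simp [Measure.real, hx.1]

theorem tendsto_nhdsGT_of_abs_sub_le_mul_sqrt {u : ℝ → ℝ} {a b C : ℝ} (hab : a < b)
    (h : ∀ x ∈ Ioc a b, |u x - u a| ≤ C * √(x - a)) :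
    Tendsto u (𝓝[>] a) (𝓝 (u a)) := by
  rw [tendsto_iff_norm_sub_tendsto_zero]
  refine squeeze_zero_norm' (a := fun x => C * √(x - a)) ?_ ?_
  · filter_upwards [Ioc_mem_nhdsGT hab] with x hx
    simpa using h x hx
  · have : Tendsto (fun x => C * √(x - a)) (𝓝 a) (𝓝 (C * √(a - a))) := by
      apply Continuous.tendsto; fun_prop
    simpa using this.mono_left nhdsWithin_le_nhds

theorem eq_zero_of_tendsto_of_integrableOn_sq_mul_rpow_neg {G : ℝ → ℝ} {L α δ : ℝ}
    (hα : 1 ≤ α) (hδ : 0 < δ) (hG : Tendsto G (𝓝[>] 0) (𝓝 L))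
    (hint : IntegrableOn (fun x => G x ^ 2 * x ^ (-α)) (Ioo 0 δ)) : L = 0 := by
  by_contra hL
  have hbound : ∀ᶠ x in 𝓝[>] 0, (L / 2) ^ 2 ≤ G x ^ 2 :=
    (hG.pow 2).eventually (eventually_ge_nhds (by nlinarith [sq_pos_of_ne_zero hL]))
  obtain ⟨ε, hε, hεsub⟩ := mem_nhdsGT_iff_exists_Ioo_subset.1 hbound
  set η := min δ ε
  have hη : 0 < η := lt_min hδ hε
  have hrpow : IntegrableOn (fun x : ℝ => x ^ (-α)) (Ioo 0 η) := by
    refine Integrable.mono'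
      ((hint.mono_set (Ioo_subset_Ioo_right (min_le_left _ _))).const_mul ((L / 2) ^ 2)⁻¹) ?_ ?_
    · exact (continuousOn_id.rpow_const fun x hx => .inl hx.1.ne').aestronglyMeasurable
        measurableSet_Ioo
    · filter_upwards [ae_restrict_mem measurableSet_Ioo] with x hx
      have hxα : 0 ≤ x ^ (-α) := Real.rpow_nonneg hx.1.le _
      have hGx := hεsub ⟨hx.1, hx.2.trans_le (min_le_right _ _)⟩
      rw [Real.norm_of_nonneg hxα, le_inv_mul_iff₀ (by positivity)]
      exact mul_le_mul_of_nonneg_right hGx hxα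
  rw [intervalIntegral.integrableOn_Ioo_rpow_iff hη] at hrpow
  linarith

theorem stmt3_general (α : ℝ) (hα1 : 1 ≤ α)
    (f' F F' : ℝ → ℝ)
    (hw : IntegrableOn (fun x => x ^ α * (f' x) ^ 2) (Ioo (0 : ℝ) 1) volume)
    (hflux : ∀ᵐ x ∂(volume.restrict (Ioo (0 : ℝ) 1)), F x = x ^ α * f' x)
    (hFAC : AbsContOnWith F F' 0 1)
    (hF' : IntegrableOn (fun x => (F' x) ^ 2) (Ioo (0 : ℝ) 1) volume) :
    Tendsto F (nhdsWithin 0 (Ioi 0)) (nhds 0) ∧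
      ∀ x ∈ Ioo (0 : ℝ) 1,
        |F x| ≤ Real.sqrt (∫ s in Ioo (0 : ℝ) 1, (F' s) ^ 2) * Real.sqrt x := by
  have hHolder : ∀ x ∈ Icc (0 : ℝ) 1,
      |F x - F 0| ≤ √(∫ s in Ioo (0 : ℝ) 1, F' s ^ 2) * √(x - 0) :=
    fun x hx => hFAC.abs_sub_le_sqrt_mul_sqrt hF' hx
  have hlim : Tendsto F (𝓝[>] 0) (𝓝 (F 0)) :=
    tendsto_nhdsGT_of_abs_sub_le_mul_sqrt one_pos fun x hx => hHolder x (Ioc_subset_Icc_self hx)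
  have hint : IntegrableOn (fun x => F x ^ 2 * x ^ (-α)) (Ioo 0 1) := by
    refine hw.congr ?_
    filter_upwards [hflux, ae_restrict_mem measurableSet_Ioo] with x hFx hx
    have hxα : x ^ α ≠ 0 := (Real.rpow_pos_of_pos hx.1 α).ne'
    rw [hFx, Real.rpow_neg hx.1.le]
    field_simp
  have hF0 : F 0 = 0 := eq_zero_of_tendsto_of_integrableOn_sq_mul_rpow_neg hα1 one_pos hlim hint
  rw [hF0] at hlim hHolder
  exact ⟨hlim, fun x hx => by simpa using hHolder x (Ioo_subset_Icc_self hx)⟩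

/-- Let `1 ≤ α < 2` and let `f : (0,1] → ℝ` be locally absolutely
continuous (with derivative `f'`) with `∫_0^1 x^α f'(x)² dx < ∞`, such that
`x ↦ x^α f'(x)` agrees a.e. on `(0,1)` with an absolutely continuous function `F`
on `[0,1]` whose derivative `F'` lies in `L²(0,1)`. Then `F(x) → 0` as `x → 0⁺`,
and `|F(x)| ≤ C √x` on `(0,1)` with `C = (∫_0^1 F'(s)² ds)^{1/2}`. -/
theorem stmt3 (α : ℝ) (hα1 : 1 ≤ α) (hα2 : α < 2)
    (f f' F F' : ℝ → ℝ)
    (hAC : ∀ c : ℝ, 0 < c → c ≤ 1 → AbsContOnWith f f' c 1)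
    (hw : IntegrableOn (fun x => x ^ α * (f' x) ^ 2) (Ioo (0 : ℝ) 1) volume)
    (hflux : ∀ᵐ x ∂(volume.restrict (Ioo (0 : ℝ) 1)), F x = x ^ α * f' x)
    (hFAC : AbsContOnWith F F' 0 1)
    (hF' : IntegrableOn (fun x => (F' x) ^ 2) (Ioo (0 : ℝ) 1) volume) :
    Tendsto F (nhdsWithin 0 (Ioi 0)) (nhds 0) ∧
      ∀ x ∈ Ioo (0 : ℝ) 1,
        |F x| ≤ Real.sqrt (∫ s in Ioo (0 : ℝ) 1, (F' s) ^ 2) * Real.sqrt x :=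
  stmt3_general α hα1 f' F F' hw hflux hFAC hF'
end

section
/- Let 0 ≤ α < 2, α ≠ 2, set κ = (2-α)/2 and ν = |α-1|/(2-α), and let λ > 0. Put c = (2/(2-α))√λ = √λ/κ. Suppose Ψ : (0, c] → ℝ is twice differentiable and satisfies Bessel's equation of order ν: y² Ψ''(y) + y Ψ'(y) + (y² - ν²) Ψ(y) = 0 for all y ∈ (0, c]. Then the function Φ : (0,1) → ℝ defined by Φ(x) = x^{(1-α)/2} Ψ(c x^{κ}) is twice differentiable on (0,1) and satisfies the degenerate eigenvalue equation (x^α Φ'(x))' + λ Φ(x) = 0 for all x ∈ (0,1). -/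
open MeasureTheory Set Filter

/-- **Kamke change of variables.** Let `0 ≤ α < 2`,
`κ = (2-α)/2`, `ν = |α-1|/(2-α)`, `λ > 0` and `c = (2/(2-α))√λ = √λ/κ`.
If `Ψ` is twice differentiable on `(0,c]` and satisfies Bessel's equation
of order `ν` there, then `Φ(x) = x^{(1-α)/2} Ψ(c x^κ)` is twice differentiable
on `(0,1)` and satisfies `(x^α Φ')' + λ Φ = 0` on `(0,1)`. -/
theorem stmt5 (α lam ν κ c : ℝ) (hα0 : 0 ≤ α) (hα2 : α < 2) (hlam : 0 < lam)
    (hν : ν = |α - 1| / (2 - α)) (hκ : κ = (2 - α) / 2)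
    (hc : c = 2 / (2 - α) * Real.sqrt lam)
    (Ψ Ψ' Ψ'' : ℝ → ℝ)
    (hΨ : ∀ y ∈ Ioc (0 : ℝ) c, HasDerivAt Ψ (Ψ' y) y)
    (hΨ' : ∀ y ∈ Ioc (0 : ℝ) c, HasDerivAt Ψ' (Ψ'' y) y)
    (hode : ∀ y ∈ Ioc (0 : ℝ) c,
      y ^ 2 * Ψ'' y + y * Ψ' y + (y ^ 2 - ν ^ 2) * Ψ y = 0)
    (Φ : ℝ → ℝ)
    (hΦ : ∀ x ∈ Ioo (0 : ℝ) 1, Φ x = x ^ ((1 - α) / 2) * Ψ (c * x ^ κ)) :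
    (∀ x ∈ Ioo (0 : ℝ) 1, DifferentiableAt ℝ Φ x) ∧
    (∀ x ∈ Ioo (0 : ℝ) 1, DifferentiableAt ℝ (deriv Φ) x) ∧
    (∀ x ∈ Ioo (0 : ℝ) 1,
      HasDerivAt (fun y => y ^ α * deriv Φ y) (-(lam * Φ x)) x) := by
  set β := (1 - α) / 2 with hβ
  have h2α : (0:ℝ) < 2 - α := by linarith
  have hκpos : 0 < κ := by rw [hκ]; positivity
  have hcpos : 0 < c := by
    rw [hc]; exact mul_pos (div_pos two_pos h2α) (Real.sqrt_pos.mpr hlam)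
  have hcκ : c * κ = Real.sqrt lam := by
    rw [hc, hκ]; field_simp
  have hlam' : c * κ * (c * κ) = lam := by
    rw [hcκ]; exact Real.mul_self_sqrt hlam.le
  have hb2 : κ ^ 2 * ν ^ 2 = β ^ 2 := by
    have hkv : κ * ν = |α - 1| / 2 := by
      rw [hκ, hν]; field_simp
    have h1 : κ ^ 2 * ν ^ 2 = (κ * ν) ^ 2 := by ring
    rw [h1, hkv, div_pow, sq_abs, hβ]; ring
  have e0 : α + 2 * β - 1 = 0 := by rw [hβ]; ring
  -- membership of the transformed point
  have hy : ∀ x ∈ Ioo (0:ℝ) 1, c * x ^ κ ∈ Ioc (0:ℝ) c := by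
    intro x hx
    constructor
    · exact mul_pos hcpos (Real.rpow_pos_of_pos hx.1 κ)
    · calc c * x ^ κ ≤ c * 1 := by
            gcongr
            exact Real.rpow_le_one hx.1.le hx.2.le hκpos.le
        _ = c := by ring
  -- first derivative
  have hF : ∀ x ∈ Ioo (0:ℝ) 1, HasDerivAt Φ
      (β * x ^ (β - 1) * Ψ (c * x ^ κ)
        + x ^ β * (Ψ' (c * x ^ κ) * (c * (κ * x ^ (κ - 1))))) x := by
    intro x hx
    have hx0 : (0:ℝ) < x := hx.1
    have hchain : HasDerivAt (fun t : ℝ => c * t ^ κ) (c * (κ * x ^ (κ - 1))) x :=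
      (Real.hasDerivAt_rpow_const (Or.inl hx0.ne')).const_mul c
    have hΨcomp : HasDerivAt (fun t : ℝ => Ψ (c * t ^ κ))
        (Ψ' (c * x ^ κ) * (c * (κ * x ^ (κ - 1)))) x :=
      (hΨ _ (hy x hx)).comp x hchain
    have hprod : HasDerivAt (fun t : ℝ => t ^ β * Ψ (c * t ^ κ))
        (β * x ^ (β - 1) * Ψ (c * x ^ κ)
          + x ^ β * (Ψ' (c * x ^ κ) * (c * (κ * x ^ (κ - 1))))) x :=
      (Real.hasDerivAt_rpow_const (Or.inl hx0.ne')).mul hΨcomp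
    exact hprod.congr_of_eventuallyEq
      (Filter.eventuallyEq_of_mem (isOpen_Ioo.mem_nhds hx) fun t ht => hΦ t ht)
  refine ⟨fun x hx => (hF x hx).differentiableAt, ?_, ?_⟩
  · -- second differentiability
    intro x hx
    have hx0 : (0:ℝ) < x := hx.1
    have hchain : HasDerivAt (fun t : ℝ => c * t ^ κ) (c * (κ * x ^ (κ - 1))) x :=
      (Real.hasDerivAt_rpow_const (Or.inl hx0.ne')).const_mul c
    have dΨ : DifferentiableAt ℝ (fun t : ℝ => Ψ (c * t ^ κ)) x :=
      (((hΨ _ (hy x hx)).comp x hchain).differentiableAt :)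
    have dΨ' : DifferentiableAt ℝ (fun t : ℝ => Ψ' (c * t ^ κ)) x :=
      (((hΨ' _ (hy x hx)).comp x hchain).differentiableAt :)
    have dr : ∀ p : ℝ, DifferentiableAt ℝ (fun t : ℝ => t ^ p) x := fun p =>
      (Real.hasDerivAt_rpow_const (Or.inl hx0.ne')).differentiableAt
    have dF : DifferentiableAt ℝ (fun t : ℝ => β * t ^ (β - 1) * Ψ (c * t ^ κ)
        + t ^ β * (Ψ' (c * t ^ κ) * (c * (κ * t ^ (κ - 1))))) x :=
      (((dr (β - 1)).const_mul β).mul dΨ).add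
        ((dr β).mul (dΨ'.mul (((dr (κ - 1)).const_mul κ).const_mul c)))
    refine dF.congr_of_eventuallyEq ?_
    exact Filter.eventuallyEq_of_mem (isOpen_Ioo.mem_nhds hx) fun t ht => (hF t ht).deriv
  · -- third part
    intro x hx
    have hx0 : (0:ℝ) < x := hx.1
    have hchain : HasDerivAt (fun t : ℝ => c * t ^ κ) (c * (κ * x ^ (κ - 1))) x :=
      (Real.hasDerivAt_rpow_const (Or.inl hx0.ne')).const_mul c
    have hΨcomp : HasDerivAt (fun t : ℝ => Ψ (c * t ^ κ))
        (Ψ' (c * x ^ κ) * (c * (κ * x ^ (κ - 1)))) x :=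
      (hΨ _ (hy x hx)).comp x hchain
    have hΨ'comp : HasDerivAt (fun t : ℝ => Ψ' (c * t ^ κ))
        (Ψ'' (c * x ^ κ) * (c * (κ * x ^ (κ - 1)))) x :=
      (hΨ' _ (hy x hx)).comp x hchain
    have hG : HasDerivAt (fun t : ℝ => β * t ^ (α + β - 1) * Ψ (c * t ^ κ)
        + c * κ * t ^ (α + β + κ - 1) * Ψ' (c * t ^ κ))
        ((β * ((α + β - 1) * x ^ (α + β - 1 - 1)) * Ψ (c * x ^ κ)
          + β * x ^ (α + β - 1) * (Ψ' (c * x ^ κ) * (c * (κ * x ^ (κ - 1)))))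
         + (c * κ * ((α + β + κ - 1) * x ^ (α + β + κ - 1 - 1)) * Ψ' (c * x ^ κ)
          + c * κ * x ^ (α + β + κ - 1) * (Ψ'' (c * x ^ κ) * (c * (κ * x ^ (κ - 1)))))) x :=
      ((((Real.hasDerivAt_rpow_const (Or.inl hx0.ne')).const_mul β).mul hΨcomp)).add
        ((((Real.hasDerivAt_rpow_const (Or.inl hx0.ne')).const_mul (c * κ)).mul hΨ'comp))
    have heq3 : (fun t : ℝ => t ^ α * deriv Φ t) =ᶠ[nhds x]
        (fun t : ℝ => β * t ^ (α + β - 1) * Ψ (c * t ^ κ)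
          + c * κ * t ^ (α + β + κ - 1) * Ψ' (c * t ^ κ)) := by
      refine Filter.eventuallyEq_of_mem (isOpen_Ioo.mem_nhds hx) fun t ht => ?_
      have ht0 : (0:ℝ) < t := ht.1
      rw [(hF t ht).deriv]
      have e1 : t ^ (α + β - 1) = t ^ α * t ^ (β - 1) := by
        rw [← Real.rpow_add ht0]; ring_nf
      have e2 : t ^ (α + β + κ - 1) = t ^ α * t ^ β * t ^ (κ - 1) := by
        rw [← Real.rpow_add ht0, ← Real.rpow_add ht0]; ring_nf
      rw [e1, e2]; ring
    have hG' := hG.congr_of_eventuallyEq heq3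
    have hfin : (β * ((α + β - 1) * x ^ (α + β - 1 - 1)) * Ψ (c * x ^ κ)
          + β * x ^ (α + β - 1) * (Ψ' (c * x ^ κ) * (c * (κ * x ^ (κ - 1)))))
         + (c * κ * ((α + β + κ - 1) * x ^ (α + β + κ - 1 - 1)) * Ψ' (c * x ^ κ)
          + c * κ * x ^ (α + β + κ - 1) * (Ψ'' (c * x ^ κ) * (c * (κ * x ^ (κ - 1)))))
        = -(lam * Φ x) := by
      rw [hΦ x hx]
      have hE := hode _ (hy x hx)
      have p1 : x ^ (α + β - 1 - 1) = x ^ (-β - 1) := by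
        congr 1; linarith
      have p2 : x ^ (α + β + κ - 1 - 1) = x ^ (-β - 1) * x ^ κ := by
        rw [← Real.rpow_add hx0]; congr 1; linarith
      have p2' : x ^ (α + β - 1) * x ^ (κ - 1) = x ^ (-β - 1) * x ^ κ := by
        rw [← Real.rpow_add hx0, ← Real.rpow_add hx0]; congr 1; linarith
      have p3 : x ^ (α + β + κ - 1) * x ^ (κ - 1) = x ^ (-β - 1) * (x ^ κ * x ^ κ) := by
        rw [← Real.rpow_add hx0, ← Real.rpow_add hx0, ← Real.rpow_add hx0]
        congr 1; linarith
      have pβ : x ^ β = x ^ (-β - 1) * (x ^ κ * x ^ κ) := by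
        rw [← Real.rpow_add hx0, ← Real.rpow_add hx0]
        congr 1; linarith
      set A := x ^ (-β - 1) with hA
      set P := x ^ κ with hP
      -- goal is now a polynomial identity in A, P, Ψ, Ψ', Ψ''
      rw [p1, pβ]
      linear_combination (κ ^ 2 * A) * hE
        + (c * κ * A * P * (Ψ' (c * P)) + β * A * (Ψ (c * P))) * e0
        + (-(A * P * P * (Ψ (c * P)))) * hlam'
        + (A * (Ψ (c * P))) * hb2
        + (β * (Ψ' (c * P)) * (c * κ)) * p2'
        + (c * κ * (α + β + κ - 1) * (Ψ' (c * P))) * p2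
        + (c * c * κ * κ * (Ψ'' (c * P))) * p3
    rw [hfin] at hG'
    exact hG'
end

section
/- Let 1 ≤ α < 2, set ν = (α-1)/(2-α) and κ = (2-α)/2, and let j > 0 satisfy J_ν(j) = 0, where J_ν is the Bessel function of the first kind of order ν. Define Φ : [-1,1] → ℝ by Φ(x) = x^{(1-α)/2} J_ν(j x^{κ}) for x ∈ (0,1] and Φ(x) = 0 for x ∈ [-1,0]. Then: (i) Φ ∈ L²(-1,1) and Φ is locally absolutely continuous on (0,1] and on [-1,0); (ii) Φ(-1) = Φ(1) = 0; (iii) ∫_{-1}^1 |x|^α Φ'(x)² dx < ∞; (iv) the function equal to x^α Φ'(x) on (0,1), and to 0 on (-1,0], extends to an absolutely continuous function G on [-1,1] with G' ∈ L²(-1,1) (in particular x^α Φ'(x) → 0 as x → 0⁺); and (v) -G'(x) = κ² j² Φ(x) for a.e. x ∈ (-1,1). In other words, Φ belongs to H²_α(-1,1) and is an eigenfunction of -( |x|^α u')' with Dirichlet boundary conditions, with eigenvalue κ² j². -/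
open MeasureTheory Set Filter

/-- The Bessel function of the first kind of (real) order `ν`, defined by its
ascending power series `J_ν(y) = Σ_{m≥0} (-1)^m / (m! Γ(m+ν+1)) (y/2)^{2m+ν}`
(the same formula also defines `J_{-ν}` for non-integer `ν`). -/
noncomputable def besselJ (ν : ℝ) (y : ℝ) : ℝ :=
  ∑' m : ℕ, ((-1 : ℝ) ^ m / (m.factorial * Real.Gamma ((m : ℝ) + ν + 1))) *
    (y / 2) ^ (2 * (m : ℝ) + ν)

/-- Membership in the strongly degenerate weighted Sobolev space `H¹_α(-1,1)`
(for `α ∈ [1,2)`), with explicit derivative witness `u'`. -/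
def MemH1Strong (α : ℝ) (u u' : ℝ → ℝ) : Prop :=
  IntegrableOn (fun x => (u x) ^ 2) (Ioo (-1 : ℝ) 1) volume ∧
  (∀ c : ℝ, 0 < c → c ≤ 1 → AbsContOnWith u u' c 1) ∧
  (∀ c : ℝ, -1 ≤ c → c < 0 → AbsContOnWith u u' (-1) c) ∧
  u (-1) = 0 ∧ u 1 = 0 ∧
  IntegrableOn (fun x => |x| ^ α * (u' x) ^ 2) (Ioo (-1 : ℝ) 1) volume

/-!
Write `c = 2 - α`. Since `J_ν(j s) = s^ν f(s²)` for the entire series `f(t) = Σ aₘ tᵐ` with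
`aₘ = (-1)^m (j/2)^{2m+ν} / (m! Γ(m+ν+1))`, the function `Φ` is `f(x^c)` on `(0,1]`. Hence
`Φ' = c x^{c-1} f'(x^c)`, and the flux `x^α Φ' = c x f'(x^c)` is continuous on `[0,1]` and
vanishes at `0`. Differentiating termwise, `(c x f'(x^c))' = Σ c (1 + c m) (m+1) a_{m+1} x^{cm}`,
and the Bessel recurrence `(m+1)(m+1+ν) a_{m+1} = -(j/2)² aₘ` together with `c (ν + 1) = 1`
turns this into `-(c/2)² j² f(x^c) = -κ² j² Φ`. Integrability and absolute continuity then come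
from the continuity of these expressions, the flux being differentiable away from `0`.
-/

noncomputable def scalarSeries (a : ℕ → ℝ) (u : ℝ) : ℝ := ∑' m, a m * u ^ m

def derivCoeff (a : ℕ → ℝ) (m : ℕ) : ℝ := (m + 1) * a (m + 1)

def IsEntireCoeff (a : ℕ → ℝ) : Prop := ∀ R : ℝ, Summable fun m => |a m| * R ^ m

namespace IsEntireCoeff

variable {a : ℕ → ℝ}

theorem summable (ha : IsEntireCoeff a) (u : ℝ) : Summable fun m => a m * u ^ m :=
  .of_norm <| by simpa [abs_mul] using ha |u|

theorem hasSum (ha : IsEntireCoeff a) (u : ℝ) :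
    HasSum (fun m => a m * u ^ m) (scalarSeries a u) :=
  (ha.summable u).hasSum

theorem deriv (ha : IsEntireCoeff a) : IsEntireCoeff (derivCoeff a) := by
  intro R
  set S := 2 * (|R| + 1)
  refine .of_norm_bounded ((summable_nat_add_iff 1).2 (ha S)) fun m => ?_
  have hm : ((m : ℝ) + 1) ≤ 2 ^ (m + 1) := by exact_mod_cast (m + 1).lt_two_pow_self.le
  have hR : |R| ^ m ≤ (|R| + 1) ^ (m + 1) :=
    (pow_le_pow_left₀ (abs_nonneg R) (by linarith) m).trans
      (pow_le_pow_right₀ (by linarith [abs_nonneg R]) m.le_succ)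
  calc ‖|derivCoeff a m| * R ^ m‖ = |a (m + 1)| * (((m : ℝ) + 1) * |R| ^ m) := by
        simp only [derivCoeff, norm_mul, Real.norm_eq_abs, abs_abs, abs_mul, abs_pow]
        rw [abs_of_nonneg (by positivity : (0 : ℝ) ≤ m + 1)]; ring
    _ ≤ |a (m + 1)| * S ^ (m + 1) := by
        rw [mul_pow]; gcongr

theorem hasDerivAt_scalarSeries (ha : IsEntireCoeff a) (u : ℝ) :
    HasDerivAt (scalarSeries a) (scalarSeries (derivCoeff a) u) u := by
  set R := |u| + 1
  have hu : u ∈ Ioo (-R) R := abs_lt.1 (by linarith)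
  have hbound : Summable fun m : ℕ => |a m| * (m * R ^ (m - 1)) := by
    refine (summable_nat_add_iff 1).1 ((ha.deriv R).congr fun m => ?_)
    simp only [derivCoeff, abs_mul, Nat.cast_add, Nat.cast_one, add_tsub_cancel_right]
    rw [abs_of_nonneg (by positivity : (0 : ℝ) ≤ m + 1)]; ring
  have hterm : ∀ (m : ℕ) {y : ℝ}, |y| ≤ R →
      ‖a m * (m * y ^ (m - 1))‖ ≤ |a m| * (m * R ^ (m - 1)) :=
    fun m y hy => by
      rw [norm_mul, norm_mul, Real.norm_natCast, norm_pow, Real.norm_eq_abs, Real.norm_eq_abs]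
      gcongr
  have hsum : Summable fun m : ℕ => a m * (m * u ^ (m - 1)) :=
    .of_norm_bounded hbound fun m => hterm m (by linarith)
  refine (hasDerivAt_tsum_of_isPreconnected hbound isOpen_Ioo isPreconnected_Ioo
    (fun m y _ => (hasDerivAt_pow m y).const_mul (a m)) (fun m y hy => hterm m (abs_lt.2 hy).le)
    hu (ha.summable u) hu).congr_deriv ?_
  rw [hsum.tsum_eq_zero_add, scalarSeries]
  simp [derivCoeff, mul_comm, mul_left_comm]

theorem continuous_scalarSeries (ha : IsEntireCoeff a) : Continuous (scalarSeries a) :=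
  continuous_iff_continuousAt.2 fun u => (ha.hasDerivAt_scalarSeries u).continuousAt

theorem hasSum_natCast_mul (ha : IsEntireCoeff a) (u : ℝ) :
    HasSum (fun m : ℕ => m * a m * u ^ m) (u * scalarSeries (derivCoeff a) u) := by
  have h := (ha.deriv.hasSum u).mul_left u
  refine (hasSum_nat_add_iff' 1).1 ?_
  simpa [scalarSeries, derivCoeff, pow_succ, mul_comm, mul_left_comm, mul_assoc] using h

end IsEntireCoeff

def fluxCoeff (a : ℕ → ℝ) (c : ℝ) (m : ℕ) : ℝ := c * ((1 + c * m) * derivCoeff a m)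

theorem IsEntireCoeff.scalarSeries_fluxCoeff {a : ℕ → ℝ} (ha : IsEntireCoeff a) (c u : ℝ) :
    scalarSeries (fluxCoeff a c) u = c * (scalarSeries (derivCoeff a) u +
      c * (u * scalarSeries (derivCoeff (derivCoeff a)) u)) := by
  have h := ((ha.deriv.hasSum u).add ((ha.deriv.hasSum_natCast_mul u).mul_left c)).mul_left c
  rw [scalarSeries, ← h.tsum_eq]
  exact tsum_congr fun m => by simp only [fluxCoeff]; ring

theorem IsEntireCoeff.continuous_scalarSeries_fluxCoeff {a : ℕ → ℝ} (ha : IsEntireCoeff a)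
    (c : ℝ) : Continuous (scalarSeries (fluxCoeff a c)) := by
  rw [funext (ha.scalarSeries_fluxCoeff c)]
  exact continuous_const.mul (ha.deriv.continuous_scalarSeries.add (continuous_const.mul
    (continuous_id.mul ha.deriv.deriv.continuous_scalarSeries)))

section PositiveHalfLine

variable {g g' : ℝ → ℝ}

theorem hasDerivAt_ite_pos {x : ℝ} (hx : x ≠ 0) (hg : 0 < x → HasDerivAt g (g' x) x) :
    HasDerivAt (fun y => if 0 < y then g y else 0) (if 0 < x then g' x else 0) x := by
  rcases hx.lt_or_gt with hneg | hpos
  · rw [if_neg hneg.not_gt]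
    refine (hasDerivAt_const x 0).congr_of_eventuallyEq ?_
    filter_upwards [Iio_mem_nhds hneg] with y hy using if_neg (not_lt.2 (le_of_lt hy))
  · rw [if_pos hpos]
    refine (hg hpos).congr_of_eventuallyEq ?_
    filter_upwards [Ioi_mem_nhds hpos] with y hy using if_pos hy

theorem continuous_ite_pos (hg : Continuous g) (hg0 : g 0 = 0) :
    Continuous fun x => if 0 < x then g x else 0 := by
  convert hg.comp (continuous_id.max continuous_const : Continuous fun x : ℝ => max x 0) using 1
  ext x
  split_ifs with hx
  · simp [max_eq_left hx.le]
  · simp [max_eq_right (not_lt.1 hx), hg0]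

theorem integrableOn_Icc_ite_pos {d e : ℝ} (hg : ContinuousOn g (Icc d e)) :
    IntegrableOn (fun x => if 0 < x then g x else 0) (Icc d e) := by
  refine (hg.integrableOn_Icc.indicator (measurableSet_Ioi (a := 0))).congr_fun (fun x _ => ?_)
    measurableSet_Icc
  simp [indicator_apply]

end PositiveHalfLine

theorem absContOnWith_of_hasDerivAt_off_countable {u u' : ℝ → ℝ} {c d : ℝ} {s : Set ℝ}
    (hs : s.Countable) (hu : ContinuousOn u (Icc c d))
    (hderiv : ∀ x ∈ Ioo c d \ s, HasDerivAt u (u' x) x)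
    (hint : IntervalIntegrable u' volume c d) : AbsContOnWith u u' c d := by
  refine ⟨hint, fun x hx => ?_⟩
  have hsub : Icc c x ⊆ Icc c d := Icc_subset_Icc_right hx.2
  have hint' : IntervalIntegrable u' volume c x := hint.mono_set <| by
    rwa [uIcc_of_le hx.1, uIcc_of_le (hx.1.trans hx.2)]
  rw [integral_eq_of_hasDerivAt_off_countable_of_le u u' hx.1 hs (hu.mono hsub)
    (fun y hy => hderiv y ⟨Ioo_subset_Ioo_right hx.2 hy.1, hy.2⟩) hint']
  ring

noncomputable def seriesProfile (a : ℕ → ℝ) (c x : ℝ) : ℝ :=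
  if 0 < x then scalarSeries a (x ^ c) else 0

noncomputable def seriesProfileDeriv (a : ℕ → ℝ) (c x : ℝ) : ℝ :=
  if 0 < x then c * x ^ (c - 1) * scalarSeries (derivCoeff a) (x ^ c) else 0

noncomputable def seriesFlux (a : ℕ → ℝ) (c x : ℝ) : ℝ :=
  if 0 < x then c * x * scalarSeries (derivCoeff a) (x ^ c) else 0

theorem seriesProfile_const_mul (r : ℝ) (a : ℕ → ℝ) (c x : ℝ) :
    seriesProfile (fun m => r * a m) c x = r * seriesProfile a c x := by
  unfold seriesProfile scalarSeries
  split_ifs <;> simp [mul_assoc, tsum_mul_left]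

section SeriesProfile

variable {a : ℕ → ℝ} {c : ℝ}

theorem hasDerivAt_seriesProfile (ha : IsEntireCoeff a) {x : ℝ} (hx : x ≠ 0) :
    HasDerivAt (seriesProfile a c) (seriesProfileDeriv a c x) x :=
  hasDerivAt_ite_pos (g := fun y => scalarSeries a (y ^ c))
    (g' := fun y => c * y ^ (c - 1) * scalarSeries (derivCoeff a) (y ^ c)) hx fun hpos =>
    ((ha.hasDerivAt_scalarSeries _).comp x
      (Real.hasDerivAt_rpow_const (p := c) (Or.inl hpos.ne'))).congr_deriv (by ring)

theorem hasDerivAt_seriesFlux (ha : IsEntireCoeff a) {x : ℝ} (hx : x ≠ 0) :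
    HasDerivAt (seriesFlux a c) (seriesProfile (fluxCoeff a c) c x) x := by
  refine hasDerivAt_ite_pos (g := fun y => c * y * scalarSeries (derivCoeff a) (y ^ c))
    (g' := fun y => scalarSeries (fluxCoeff a c) (y ^ c)) hx fun hpos => ?_
  have h := ((hasDerivAt_id x).const_mul c).mul ((ha.deriv.hasDerivAt_scalarSeries _).comp x
    (Real.hasDerivAt_rpow_const (p := c) (Or.inl hpos.ne')))
  refine h.congr_deriv ?_
  rw [ha.scalarSeries_fluxCoeff, Real.rpow_sub_one hpos.ne']
  simp only [Function.comp_apply, id]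
  field_simp

theorem continuous_seriesFlux (ha : IsEntireCoeff a) (hc : 0 < c) : Continuous (seriesFlux a c) :=
  continuous_ite_pos ((continuous_const.mul continuous_id).mul
    (ha.deriv.continuous_scalarSeries.comp (Real.continuous_rpow_const hc.le))) (by simp)

theorem rpow_two_sub_mul_seriesProfileDeriv {x : ℝ} (hx : 0 < x) :
    x ^ (2 - c) * seriesProfileDeriv a c x = seriesFlux a c x := by
  have hpow : x ^ (2 - c) * x ^ (c - 1) = x := by
    rw [← Real.rpow_add hx]; norm_num
  simp only [seriesProfileDeriv, seriesFlux, if_pos hx]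
  linear_combination c * scalarSeries (derivCoeff a) (x ^ c) * hpow

theorem integrableOn_seriesProfile (ha : Continuous (scalarSeries a)) (hc : 0 ≤ c) (d e : ℝ) :
    IntegrableOn (seriesProfile a c) (Icc d e) :=
  integrableOn_Icc_ite_pos (ha.comp (Real.continuous_rpow_const hc)).continuousOn

theorem absContOnWith_seriesProfile (ha : IsEntireCoeff a) {d e : ℝ}
    (h0 : (0 : ℝ) ∉ uIcc d e) :
    AbsContOnWith (seriesProfile a c) (seriesProfileDeriv a c) d e := by
  have hne : ∀ x ∈ uIcc d e, x ≠ 0 := fun x hx h => h0 (h ▸ hx)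
  have hderiv : ∀ x ∈ uIcc d e, HasDerivAt (seriesProfile a c) (seriesProfileDeriv a c x) x :=
    fun x hx => hasDerivAt_seriesProfile ha (hne x hx)
  have hint : IntegrableOn (seriesProfileDeriv a c) (uIcc d e) := by
    refine integrableOn_Icc_ite_pos (continuousOn_const.mul
      (continuousOn_id.rpow_const fun x hx => Or.inl (hne x hx)) |>.mul
      (ha.deriv.continuous_scalarSeries.comp_continuousOn
        (continuousOn_id.rpow_const fun x hx => Or.inl (hne x hx))))
  refine absContOnWith_of_hasDerivAt_off_countable countable_empty
    (fun x hx => (hderiv x (Icc_subset_uIcc hx)).continuousAt.continuousWithinAt)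
    (fun x hx => hderiv x (Icc_subset_uIcc (Ioo_subset_Icc_self hx.1))) hint.intervalIntegrable

theorem absContOnWith_seriesFlux (ha : IsEntireCoeff a) (hc : 0 < c) (d e : ℝ) :
    AbsContOnWith (seriesFlux a c) (seriesProfile (fluxCoeff a c) c) d e :=
  absContOnWith_of_hasDerivAt_off_countable (countable_singleton 0)
    (continuous_seriesFlux ha hc).continuousOn
    (fun _ hx => hasDerivAt_seriesFlux ha hx.2)
    (integrableOn_seriesProfile (ha.continuous_scalarSeries_fluxCoeff c) hc.le
      _ _).intervalIntegrable

theorem memH1Strong_seriesProfile (ha : IsEntireCoeff a) (hc : 0 < c)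
    (h1 : scalarSeries a 1 = 0) :
    MemH1Strong (2 - c) (seriesProfile a c) (seriesProfileDeriv a c) := by
  have hrpow : Continuous fun x : ℝ => x ^ c := Real.continuous_rpow_const hc.le
  have hsq : IntegrableOn (fun x => seriesProfile a c x ^ 2) (Icc (-1) 1) := by
    refine (integrableOn_Icc_ite_pos (g := fun x => scalarSeries a (x ^ c) ^ 2)
      ((ha.continuous_scalarSeries.comp hrpow).pow 2).continuousOn).congr_fun
      (fun x _ => ?_) measurableSet_Icc
    simp only [seriesProfile]
    split_ifs <;> simp
  have hweight : IntegrableOn (fun x => |x| ^ (2 - c) * seriesProfileDeriv a c x ^ 2)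
      (Icc (-1) 1) := by
    refine (integrableOn_Icc_ite_pos
      (g := fun x => c ^ 2 * x ^ c * scalarSeries (derivCoeff a) (x ^ c) ^ 2)
      ((continuous_const.mul hrpow).mul
        ((ha.deriv.continuous_scalarSeries.comp hrpow).pow 2)).continuousOn).congr_fun
      (fun x _ => ?_) measurableSet_Icc
    dsimp only
    split_ifs with hx
    · rw [abs_of_pos hx, sq (seriesProfileDeriv a c x), ← mul_assoc,
        rpow_two_sub_mul_seriesProfileDeriv hx]
      simp only [seriesFlux, seriesProfileDeriv, if_pos hx]
      rw [Real.rpow_sub_one hx.ne']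
      field_simp
    · simp [seriesProfileDeriv, hx]
  refine ⟨hsq.mono_set Ioo_subset_Icc_self, fun d hd _ => absContOnWith_seriesProfile ha ?_,
    fun d _ hd => absContOnWith_seriesProfile ha ?_, by simp [seriesProfile],
    by simp [seriesProfile, h1], hweight.mono_set Ioo_subset_Icc_self⟩
  all_goals rw [mem_uIcc]; rintro (h | h) <;> linarith [h.1, h.2]

end SeriesProfile

noncomputable def besselCoeff (ν j : ℝ) (m : ℕ) : ℝ :=
  (-1) ^ m / (m.factorial * Real.Gamma (m + ν + 1)) * (j / 2) ^ (2 * (m : ℝ) + ν)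

section Bessel

variable {ν j : ℝ}

theorem besselCoeff_succ_mul (hν : -1 < ν) (hj : 0 < j) (m : ℕ) :
    (m + 1) * (m + 1 + ν) * besselCoeff ν j (m + 1) = -(j / 2) ^ 2 * besselCoeff ν j m := by
  have hm : (0 : ℝ) ≤ m := m.cast_nonneg
  have hΓ : Real.Gamma ((m + 1 : ℕ) + ν + 1) = (m + ν + 1) * Real.Gamma (m + ν + 1) := by
    rw [← Real.Gamma_add_one (by linarith)]
    push_cast; ring_nf
  have hpow : (j / 2) ^ (2 * ((m + 1 : ℕ) : ℝ) + ν)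
      = (j / 2) ^ 2 * (j / 2) ^ (2 * (m : ℝ) + ν) := by
    rw [show 2 * ((m + 1 : ℕ) : ℝ) + ν = 2 + (2 * m + ν) by push_cast; ring,
      Real.rpow_add (by positivity), Real.rpow_two]
  have hmν : (m : ℝ) + ν + 1 ≠ 0 := by linarith
  simp only [besselCoeff, hΓ, hpow, Nat.factorial_succ, pow_succ]
  push_cast
  field_simp
  ring

theorem isEntireCoeff_besselCoeff (hν : -1 < ν) (hj : 0 < j) :
    IsEntireCoeff (besselCoeff ν j) := by
  intro R
  set q := (j / 2) ^ 2 * |R|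
  refine summable_of_ratio_norm_eventually_le (r := 1 / 2) (by norm_num) ?_
  filter_upwards [eventually_ge_atTop ⌈2 * q⌉₊] with m hm
  have hm' : 2 * q ≤ m := (Nat.le_ceil _).trans (by exact_mod_cast hm)
  set P : ℝ := (m + 1) * (m + 1 + ν)
  have hP : (m : ℝ) ≤ P := by nlinarith [(m.cast_nonneg : (0 : ℝ) ≤ m)]
  have hPpos : 0 < P := by nlinarith
  have hrec : P * |besselCoeff ν j (m + 1)| = (j / 2) ^ 2 * |besselCoeff ν j m| := by
    have h := congrArg abs (besselCoeff_succ_mul hν hj m)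
    rwa [abs_mul, abs_of_pos hPpos, abs_mul, abs_neg, abs_of_nonneg (sq_nonneg (j / 2))] at h
  have hstep : |besselCoeff ν j (m + 1)| * |R| ≤ 1 / 2 * |besselCoeff ν j m| := by
    refine le_of_mul_le_mul_left ?_ hPpos
    calc P * (|besselCoeff ν j (m + 1)| * |R|) = q * |besselCoeff ν j m| := by
          rw [← mul_assoc, hrec]; ring
      _ ≤ P / 2 * |besselCoeff ν j m| := by gcongr; linarith
      _ = P * (1 / 2 * |besselCoeff ν j m|) := by ring
  simp only [norm_mul, Real.norm_eq_abs, abs_abs, norm_pow, pow_succ]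
  calc |besselCoeff ν j (m + 1)| * (|R| ^ m * |R|)
      = |besselCoeff ν j (m + 1)| * |R| * |R| ^ m := by ring
    _ ≤ 1 / 2 * |besselCoeff ν j m| * |R| ^ m := by gcongr
    _ = 1 / 2 * (|besselCoeff ν j m| * |R| ^ m) := by ring

theorem besselJ_mul_eq (hj : 0 ≤ j) {s : ℝ} (hs : 0 < s) :
    besselJ ν (j * s) = s ^ ν * scalarSeries (besselCoeff ν j) (s ^ 2) := by
  rw [besselJ, scalarSeries, ← tsum_mul_left]
  refine tsum_congr fun m => ?_
  have hpow : s ^ (2 * (m : ℝ) + ν) = s ^ ν * (s ^ 2) ^ m := by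
    rw [Real.rpow_add hs, Real.rpow_mul hs.le, Real.rpow_two, Real.rpow_natCast, mul_comm]
  rw [besselCoeff, mul_div_right_comm, Real.mul_rpow (by positivity) hs.le, hpow]
  ring

theorem rpow_mul_besselJ_rpow (hj : 0 ≤ j) {κ x : ℝ} (hx : 0 < x) :
    x ^ (-(κ * ν)) * besselJ ν (j * x ^ κ)
      = scalarSeries (besselCoeff ν j) (x ^ (2 * κ)) := by
  rw [besselJ_mul_eq hj (Real.rpow_pos_of_pos hx κ), ← Real.rpow_mul hx.le, ← mul_assoc,
    ← Real.rpow_add hx, neg_add_cancel, Real.rpow_zero, one_mul, ← Real.rpow_natCast,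
    ← Real.rpow_mul hx.le]
  norm_num [mul_comm]

theorem fluxCoeff_besselCoeff (hν : -1 < ν) (hj : 0 < j) {c : ℝ} (hc : c * (ν + 1) = 1) :
    fluxCoeff (besselCoeff ν j) c = fun m => -((c / 2) ^ 2 * j ^ 2) * besselCoeff ν j m := by
  ext m
  simp only [fluxCoeff, derivCoeff]
  linear_combination c ^ 2 * besselCoeff_succ_mul hν hj m
    - c * (m + 1) * besselCoeff ν j (m + 1) * hc

end Bessel

theorem stmt6_general (α ν κ j : ℝ) (hα2 : α < 2)
    (hν : ν = (α - 1) / (2 - α)) (hκ : κ = (2 - α) / 2)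
    (hj : 0 < j) (hjz : besselJ ν j = 0)
    (Φ : ℝ → ℝ)
    (hΦ : ∀ x : ℝ, Φ x =
      if 0 < x then x ^ ((1 - α) / 2) * besselJ ν (j * x ^ κ) else 0) :
    ∃ Φ' G G' : ℝ → ℝ,
      MemH1Strong α Φ Φ' ∧
      (∀ x ∈ Ioo (0 : ℝ) 1, G x = x ^ α * Φ' x) ∧
      (∀ x ∈ Ioc (-1 : ℝ) 0, G x = 0) ∧
      AbsContOnWith G G' (-1) 1 ∧
      IntegrableOn (fun x => (G' x) ^ 2) (Ioo (-1 : ℝ) 1) volume ∧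
      Tendsto (fun x => x ^ α * Φ' x) (nhdsWithin 0 (Ioi 0)) (nhds 0) ∧
      (∀ᵐ x ∂(volume.restrict (Ioo (-1 : ℝ) 1)), -G' x = κ ^ 2 * j ^ 2 * Φ x) := by
  obtain ⟨c, rfl⟩ : ∃ c, α = 2 - c := ⟨2 - α, by ring⟩
  have hc : 0 < c := by linarith
  have hκc : κ = c / 2 := by rw [hκ]; ring
  have hνc : c * (ν + 1) = 1 := by rw [hν, sub_sub_cancel]; field_simp; ring
  have hν1 : -1 < ν := by nlinarith
  set a := besselCoeff ν j
  have ha : IsEntireCoeff a := isEntireCoeff_besselCoeff hν1 hj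
  have h1 : scalarSeries a 1 = 0 := by
    simpa [hjz] using (besselJ_mul_eq (ν := ν) hj.le one_pos).symm
  have hΦa : Φ = seriesProfile a c := by
    ext x
    rw [hΦ, seriesProfile]
    split_ifs with hx
    · rw [show (1 - (2 - c)) / 2 = -(κ * ν) by rw [hκc]; field_simp; linear_combination hνc,
        rpow_mul_besselJ_rpow hj.le hx, hκc, mul_div_cancel₀ c two_ne_zero]
    · rfl
  subst hΦa
  have hH1 := memH1Strong_seriesProfile ha hc h1
  refine ⟨seriesProfileDeriv a c, seriesFlux a c,
    fun x => -(κ ^ 2 * j ^ 2) * seriesProfile a c x, hH1,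
    fun x hx => (rpow_two_sub_mul_seriesProfileDeriv hx.1).symm,
    fun x hx => if_neg hx.2.not_gt, ?_, ?_, ?_, Eventually.of_forall fun x => by ring⟩
  · have h := absContOnWith_seriesFlux ha hc (-1) 1
    rwa [fluxCoeff_besselCoeff hν1 hj hνc, ← hκc, funext (seriesProfile_const_mul _ a c)] at h
  · exact IntegrableOn.congr_fun (hH1.1.const_mul ((κ ^ 2 * j ^ 2) ^ 2)) (fun x _ => by ring)
      measurableSet_Ioo
  · have h0 := ((continuous_seriesFlux ha hc).tendsto 0).mono_left
      (nhdsWithin_le_nhds (s := Ioi 0))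
    rw [show seriesFlux a c 0 = 0 from if_neg (lt_irrefl 0)] at h0
    exact h0.congr' (eventually_nhdsWithin_of_forall fun x hx =>
      (rpow_two_sub_mul_seriesProfileDeriv hx).symm)

/-- For `1 ≤ α < 2`, `ν = (α-1)/(2-α)`, `κ = (2-α)/2` and `j > 0`
a zero of `J_ν`, the function `Φ` equal to `x^{(1-α)/2} J_ν(j x^κ)` on `(0,1]` and
to `0` on `[-1,0]` belongs to `H²_α(-1,1)`: it lies in `H¹_α(-1,1)`, its flux
(equal to `x^α Φ'` on `(0,1)` and `0` on `(-1,0]`) extends to an absolutely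
continuous `G` on `[-1,1]` with `G' ∈ L²` (in particular `x^α Φ'(x) → 0` as
`x → 0⁺`), and `-G' = κ² j² Φ` a.e.: `Φ` is an eigenfunction with eigenvalue `κ²j²`. -/
theorem stmt6 (α ν κ j : ℝ) (hα1 : 1 ≤ α) (hα2 : α < 2)
    (hν : ν = (α - 1) / (2 - α)) (hκ : κ = (2 - α) / 2)
    (hj : 0 < j) (hjz : besselJ ν j = 0)
    (Φ : ℝ → ℝ)
    (hΦ : ∀ x : ℝ, Φ x =
      if 0 < x then x ^ ((1 - α) / 2) * besselJ ν (j * x ^ κ) else 0) :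
    ∃ Φ' G G' : ℝ → ℝ,
      MemH1Strong α Φ Φ' ∧
      (∀ x ∈ Ioo (0 : ℝ) 1, G x = x ^ α * Φ' x) ∧
      (∀ x ∈ Ioc (-1 : ℝ) 0, G x = 0) ∧
      AbsContOnWith G G' (-1) 1 ∧
      IntegrableOn (fun x => (G' x) ^ 2) (Ioo (-1 : ℝ) 1) volume ∧
      Tendsto (fun x => x ^ α * Φ' x) (nhdsWithin 0 (Ioi 0)) (nhds 0) ∧
      (∀ᵐ x ∂(volume.restrict (Ioo (-1 : ℝ) 1)), -G' x = κ ^ 2 * j ^ 2 * Φ x) :=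
  stmt6_general α ν κ j hα2 hν hκ hj hjz Φ hΦ
end

section
/- Let 1 < α < 2, set ν = (α-1)/(2-α) and κ = (2-α)/2, assume ν ∉ ℕ, and let λ > 0 with c = (2/(2-α))√λ. Define Φ₋ : (0,1) → ℝ by Φ₋(x) = x^{(1-α)/2} J_{-ν}(c x^{κ}), where J_{-ν} is the Bessel function of the first kind of order -ν. Then ∫_0^1 x^α Φ₋'(x)² dx = +∞, i.e. the second fundamental solution of the degenerate Sturm–Liouville equation does not have square-integrable weighted derivative; hence Φ₋ does not belong to H¹_α. -/
/-!
Near `x = 0` the second solution behaves like its leading term. Writing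
`J_{-ν}(y) = (y/2)^{-ν} g((y/2)²)` with `g` entire and `g(0) = 1/Γ(1-ν) ≠ 0` (this is where
`ν ∉ ℕ` enters), and using `κν = (α-1)/2`, one gets `Φ₋(x) = x^{1-α} G(x^{2-α})` with `G`
smooth and `G(0) ≠ 0`. Hence `x^α Φ₋'(x) → (1-α) G(0) ≠ 0`, so `x^α Φ₋'(x)² ≍ x^{-α}` near `0`,
which is not integrable there because `α > 1`.
-/

open MeasureTheory Set Filter

open Topology

noncomputable def besselCoef (ν : ℝ) (m : ℕ) : ℝ :=
  (-1 : ℝ) ^ m / (m.factorial * Real.Gamma ((m : ℝ) - ν + 1))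

noncomputable def besselG (ν : ℝ) : ℝ → ℝ :=
  FormalMultilinearSeries.ofScalarsSum (besselCoef ν)

section BesselSeries

variable {ν : ℝ}

lemma Real.Gamma_natCast_sub_add_one_ne_zero (hν : ∀ n : ℕ, ν ≠ n) (m : ℕ) :
    Real.Gamma ((m : ℝ) - ν + 1) ≠ 0 :=
  Real.Gamma_ne_zero fun n hn => hν (m + n + 1) (by push_cast; linarith)

lemma besselCoef_ne_zero (hν : ∀ n : ℕ, ν ≠ n) (m : ℕ) : besselCoef ν m ≠ 0 :=
  div_ne_zero (pow_ne_zero _ (by norm_num))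
    (mul_ne_zero (by exact_mod_cast m.factorial_ne_zero)
      (Real.Gamma_natCast_sub_add_one_ne_zero hν m))

lemma besselCoef_succ (hν : ∀ n : ℕ, ν ≠ n) (m : ℕ) :
    besselCoef ν (m + 1) = -besselCoef ν m / (((m : ℝ) + 1) * ((m : ℝ) - ν + 1)) := by
  have hne : (m : ℝ) - ν + 1 ≠ 0 := fun h => hν (m + 1) (by push_cast; linarith)
  have hΓ : Real.Gamma (((m + 1 : ℕ) : ℝ) - ν + 1) =
      ((m : ℝ) - ν + 1) * Real.Gamma ((m : ℝ) - ν + 1) := by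
    rw [← Real.Gamma_add_one hne]; push_cast; ring_nf
  have hΓne := Real.Gamma_natCast_sub_add_one_ne_zero hν m
  simp only [besselCoef, hΓ, Nat.factorial_succ, pow_succ]
  push_cast
  field_simp

lemma tendsto_norm_besselCoef_succ_div (hν : ∀ n : ℕ, ν ≠ n) :
    Tendsto (fun m : ℕ => ‖besselCoef ν (m + 1)‖ / ‖besselCoef ν m‖) atTop (𝓝 0) := by
  have hratio : ∀ m : ℕ, ‖besselCoef ν (m + 1)‖ / ‖besselCoef ν m‖ =
      |((m : ℝ) + 1) * ((m : ℝ) - ν + 1)|⁻¹ := fun m => by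
    rw [besselCoef_succ hν, norm_div, norm_neg, Real.norm_eq_abs (_ * _), div_div_cancel_left'
      (norm_ne_zero_iff.2 (besselCoef_ne_zero hν m))]
  simp only [hratio]
  have hpoly : Tendsto (fun m : ℕ => ((m : ℝ) + 1) * ((m : ℝ) - ν + 1)) atTop atTop :=
    (tendsto_atTop_add_const_right _ 1 tendsto_natCast_atTop_atTop).atTop_mul_atTop₀
      (tendsto_atTop_add_const_right _ 1
        (tendsto_atTop_add_const_right _ (-ν) tendsto_natCast_atTop_atTop))
  exact tendsto_inv_atTop_zero.comp (tendsto_abs_atTop_atTop.comp hpoly)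

lemma contDiff_besselG (hν : ∀ n : ℕ, ν ≠ n) {n : WithTop ℕ∞} : ContDiff ℝ n (besselG ν) := by
  have hr := FormalMultilinearSeries.ofScalars_radius_eq_top_of_tendsto ℝ (besselCoef ν)
    (Eventually.of_forall (besselCoef_ne_zero hν)) (tendsto_norm_besselCoef_succ_div hν)
  have hball := (FormalMultilinearSeries.ofScalars ℝ (besselCoef ν)).hasFPowerSeriesOnBall
    (hr ▸ ENNReal.zero_lt_top)
  exact AnalyticOnNhd.contDiff fun u _ =>
    hball.analyticAt_of_mem (by rw [hr]; exact edist_lt_top _ _)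

lemma besselG_zero : besselG ν 0 = besselCoef ν 0 := by
  simp [besselG]

lemma besselJ_neg_eq {y : ℝ} (hy : 0 < y) :
    besselJ (-ν) y = (y / 2) ^ (-ν) * besselG ν ((y / 2) ^ 2) := by
  rw [besselJ, besselG, FormalMultilinearSeries.ofScalars_sum_eq, ← tsum_mul_left]
  refine tsum_congr fun m => ?_
  rw [smul_eq_mul, Real.rpow_add (by positivity), ← sub_eq_add_neg, besselCoef,
    show 2 * (m : ℝ) = ((2 * m : ℕ) : ℝ) by push_cast; ring, Real.rpow_natCast, pow_mul]
  ring

lemma besselJ_neg_mul_rpow {a x : ℝ} (ha : 0 < a) (hx : 0 < x) (κ : ℝ) :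
    besselJ (-ν) (a * x ^ κ) =
      x ^ (-(κ * ν)) * ((a / 2) ^ (-ν) * besselG ν ((a / 2) ^ 2 * x ^ (2 * κ))) := by
  rw [besselJ_neg_eq (by positivity), mul_div_right_comm, Real.mul_rpow (by positivity)
    (by positivity), mul_pow, ← Real.rpow_mul hx.le, ← Real.rpow_natCast (x ^ κ),
    ← Real.rpow_mul hx.le]
  push_cast
  ring_nf

end BesselSeries

section PowerLikeSingularity

variable {g : ℝ → ℝ} {p q : ℝ}

lemma hasDerivAt_rpow_mul_comp_rpow {x : ℝ} (hx : 0 < x) (hg : DifferentiableAt ℝ g (x ^ q)) :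
    HasDerivAt (fun x => x ^ p * g (x ^ q))
      (x ^ (p - 1) * (p * g (x ^ q) + q * x ^ q * deriv g (x ^ q))) x := by
  have hxp := Real.hasDerivAt_rpow_const (p := p) (Or.inl hx.ne')
  have hxq := Real.hasDerivAt_rpow_const (p := q) (Or.inl hx.ne')
  refine (hxp.mul (hg.hasDerivAt.comp x hxq)).congr_deriv ?_
  have hpow : x ^ (p - 1) * x ^ q = x ^ p * x ^ (q - 1) := by
    rw [← Real.rpow_add hx, ← Real.rpow_add hx]; ring_nf
  simp only [Function.comp_apply]
  linear_combination (-(q * deriv g (x ^ q))) * hpow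

lemma tendsto_rpow_mul_deriv_rpow_mul_comp (hq : 0 < q) (hg : ContDiff ℝ 1 g) :
    Tendsto (fun x => x ^ (1 - p) * deriv (fun x => x ^ p * g (x ^ q)) x) (𝓝[>] 0)
      (𝓝 (p * g 0)) := by
  have hxq : Tendsto (fun x : ℝ => x ^ q) (𝓝[>] 0) (𝓝 0) := by
    simpa [Real.zero_rpow hq.ne'] using
      (Real.continuousAt_rpow_const 0 q (Or.inr hq.le)).tendsto.mono_left nhdsWithin_le_nhds
  have hlim : Tendsto (fun x => p * g (x ^ q) + q * x ^ q * deriv g (x ^ q)) (𝓝[>] 0)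
      (𝓝 (p * g 0 + q * 0 * deriv g 0)) :=
    ((hg.continuous.tendsto 0).comp hxq).const_mul p |>.add
      ((hxq.const_mul q).mul ((hg.continuous_deriv le_rfl).tendsto 0 |>.comp hxq))
  rw [mul_zero, zero_mul, add_zero] at hlim
  refine hlim.congr' ?_
  filter_upwards [self_mem_nhdsWithin] with x hx
  rw [(hasDerivAt_rpow_mul_comp_rpow hx (hg.differentiable one_ne_zero _)).deriv, ← mul_assoc,
    ← Real.rpow_add hx, sub_add_sub_cancel', sub_self, Real.rpow_zero, one_mul]

end PowerLikeSingularity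

lemma lintegral_Ioo_rpow_neg_eq_top {s δ : ℝ} (hs : 1 ≤ s) (hδ : 0 < δ) :
    ∫⁻ x in Ioo 0 δ, ENNReal.ofReal (x ^ (-s)) = ⊤ := by
  by_contra h
  have hint := (lintegral_ofReal_ne_top_iff_integrable
    ((continuousOn_id.rpow_const fun x hx => Or.inl hx.1.ne').aestronglyMeasurable
      measurableSet_Ioo)
    ((ae_restrict_iff' measurableSet_Ioo).2 (ae_of_all _ fun x hx =>
      Real.rpow_nonneg hx.1.le _))).1 h
  linarith [(intervalIntegral.integrableOn_Ioo_rpow_iff hδ).1 hint]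

lemma lintegral_Ioo_ofReal_eq_top_of_tendsto_rpow_mul {f : ℝ → ℝ} {s l b : ℝ} (hs : 1 ≤ s)
    (hl : 0 < l) (hb : 0 < b) (hf : Tendsto (fun x => x ^ s * f x) (𝓝[>] 0) (𝓝 l)) :
    ∫⁻ x in Ioo 0 b, ENNReal.ofReal (f x) = ⊤ := by
  obtain ⟨δ, hδ, hsub⟩ := mem_nhdsGT_iff_exists_Ioo_subset.1
    (inter_mem (nhdsWithin_le_nhds (Iio_mem_nhds hb))
      (hf.eventually (lt_mem_nhds (half_lt_self hl))))
  have hbound : ∀ x ∈ Ioo 0 δ, l / 2 * x ^ (-s) ≤ f x := fun x hx => by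
    have hxs := Real.rpow_pos_of_pos hx.1 s
    rw [Real.rpow_neg hx.1.le, ← div_eq_mul_inv, div_le_iff₀ hxs, mul_comm]
    exact (hsub hx).2.le
  refine eq_top_iff.2 ?_
  calc ⊤ = ∫⁻ x in Ioo 0 δ, ENNReal.ofReal (l / 2) * ENNReal.ofReal (x ^ (-s)) := by
        rw [lintegral_const_mul' _ _ ENNReal.ofReal_ne_top, lintegral_Ioo_rpow_neg_eq_top hs hδ,
          ENNReal.mul_top (by simpa using hl)]
    _ ≤ ∫⁻ x in Ioo 0 δ, ENNReal.ofReal (f x) :=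
        setLIntegral_mono' measurableSet_Ioo fun x hx => by
          rw [← ENNReal.ofReal_mul (by positivity)]
          exact ENNReal.ofReal_le_ofReal (hbound x hx)
    _ ≤ ∫⁻ x in Ioo 0 b, ENNReal.ofReal (f x) :=
        lintegral_mono_set fun x hx => ⟨hx.1, (hsub hx).1⟩

/-- For `1 < α < 2`, `ν = (α-1)/(2-α) ∉ ℕ`, `κ = (2-α)/2`,
`λ > 0` and `c = (2/(2-α))√λ`, the second fundamental solution
`Φ₋(x) = x^{(1-α)/2} J_{-ν}(c x^κ)` of the degenerate Sturm–Liouville equation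
has `∫_0^1 x^α Φ₋'(x)² dx = +∞`; in particular the weighted derivative is not
square-integrable, so `Φ₋ ∉ H¹_α`. -/
theorem stmt7 (α ν κ lam c : ℝ) (hα1 : 1 < α) (hα2 : α < 2)
    (hν : ν = (α - 1) / (2 - α)) (hκ : κ = (2 - α) / 2)
    (hνnat : ∀ n : ℕ, ν ≠ n)
    (hlam : 0 < lam) (hc : c = 2 / (2 - α) * Real.sqrt lam)
    (Φm : ℝ → ℝ)
    (hΦm : ∀ x ∈ Ioo (0 : ℝ) 1,
      Φm x = x ^ ((1 - α) / 2) * besselJ (-ν) (c * x ^ κ)) :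
    (∫⁻ x in Ioo (0 : ℝ) 1, ENNReal.ofReal (x ^ α * (deriv Φm x) ^ 2)) = ⊤ ∧
    ¬ IntegrableOn (fun x => x ^ α * (deriv Φm x) ^ 2) (Ioo (0 : ℝ) 1) volume := by
  have h2α : 0 < 2 - α := by linarith
  have hc0 : 0 < c := hc ▸ mul_pos (div_pos two_pos h2α) (Real.sqrt_pos.2 hlam)
  set G : ℝ → ℝ := fun u => (c / 2) ^ (-ν) * besselG ν ((c / 2) ^ 2 * u)
  have hG : ContDiff ℝ 1 G :=
    contDiff_const.mul ((contDiff_besselG hνnat).comp (contDiff_const.mul contDiff_id))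
  have hG0 : (1 - α) * G 0 ≠ 0 :=
    mul_ne_zero (by linarith) (mul_ne_zero (Real.rpow_pos_of_pos (by positivity) _).ne'
      (by rw [mul_zero, besselG_zero]; exact besselCoef_ne_zero hνnat 0))
  have hκν : (1 - α) / 2 + -(κ * ν) = 1 - α := by rw [hκ, hν]; field_simp; ring
  have hΦ : EqOn Φm (fun x => x ^ (1 - α) * G (x ^ (2 - α))) (Ioo 0 1) := fun x hx => by
    rw [hΦm x hx, besselJ_neg_mul_rpow hc0 hx.1, ← mul_assoc, ← Real.rpow_add hx.1, hκν, hκ,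
      mul_div_cancel₀ _ two_ne_zero]
  have hderiv : deriv Φm =ᶠ[𝓝[>] 0] deriv (fun x => x ^ (1 - α) * G (x ^ (2 - α))) := by
    filter_upwards [Ioo_mem_nhdsGT one_pos] with x hx
    exact (hΦ.eventuallyEq_of_mem (isOpen_Ioo.mem_nhds hx)).deriv_eq
  have hlim : Tendsto (fun x => x ^ α * (x ^ α * deriv Φm x ^ 2)) (𝓝[>] 0)
      (𝓝 (((1 - α) * G 0) ^ 2)) := by
    refine ((tendsto_rpow_mul_deriv_rpow_mul_comp h2α hG).pow 2).congr' ?_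
    filter_upwards [hderiv] with x hx
    rw [hx, sub_sub_cancel]
    ring
  have htop := lintegral_Ioo_ofReal_eq_top_of_tendsto_rpow_mul hα1.le (by positivity) one_pos hlim
  exact ⟨htop, fun h => h.lintegral_lt_top.ne htop⟩
end

section
/- Let 0 < a < b < 1, T > 0, and 0 < λ₁ < λ₂. Let φ₁, φ₂ ∈ L²(a,b) with ‖φ₂‖_{L²(a,b)} ≤ 1, and let h ∈ L²((a,b) × (0,T)). Define h_i(t) := ∫_a^b h(x,t) φ_i(x) dx for i = 1,2. Assume the moment relations ∫_0^T h₁(t) e^{λ₁ t} dt = 0 and ∫_0^T h₂(t) e^{λ₂ t} dt = 1. Then ‖h‖_{L²((a,b)×(0,T))} ≥ e^{-λ₂ T} / ( √T ( T (λ₂ - λ₁) + ‖φ₂ - φ₁‖_{L²(a,b)} ) ). -/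
open MeasureTheory Set Filter

/-!
Write `gᵢ(t) = ∫ₐᵇ h(x,t) φᵢ(x) dx` and `N(t) = ‖h(·,t)‖_{L²(a,b)}`. Subtracting the moment
relations gives `1 = ∫₀ᵀ (g₂(t) e^{λ₂t} - g₁(t) e^{λ₁t}) dt`. Splitting the integrand as
`g₂ (e^{λ₂t} - e^{λ₁t}) + (g₂ - g₁) e^{λ₁t}`, where `g₂ - g₁` is the coefficient of `h(·,t)`
against `φ₂ - φ₁`, Cauchy–Schwarz in `x` bounds it by `e^{λ₂T} (T(λ₂-λ₁) + ‖φ₂-φ₁‖) N(t)`, and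
Cauchy–Schwarz in `t` gives `∫₀ᵀ N ≤ √T ‖h‖`.
-/

namespace MeasureTheory

section L2

variable {α : Type*} [MeasurableSpace α] {μ : Measure α} {f g : α → ℝ}

lemma MemLp.inner_toLp_eq_integral_mul (hf : MemLp f 2 μ) (hg : MemLp g 2 μ) :
    inner ℝ (hf.toLp f) (hg.toLp g) = ∫ x, f x * g x ∂μ := by
  rw [L2.inner_def]
  refine integral_congr_ae ?_
  filter_upwards [hf.coeFn_toLp, hg.coeFn_toLp] with x hfx hgx
  simp [hfx, hgx, mul_comm]

lemma MemLp.norm_toLp_eq_sqrt_integral_sq (hf : MemLp f 2 μ) :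
    ‖hf.toLp f‖ = √(∫ x, f x ^ 2 ∂μ) := by
  rw [← Real.sqrt_sq (norm_nonneg _), ← real_inner_self_eq_norm_sq,
    hf.inner_toLp_eq_integral_mul hf]
  simp only [sq]

lemma abs_integral_mul_le_sqrt_mul_sqrt (hf : MemLp f 2 μ) (hg : MemLp g 2 μ) :
    |∫ x, f x * g x ∂μ| ≤ √(∫ x, f x ^ 2 ∂μ) * √(∫ x, g x ^ 2 ∂μ) := by
  rw [← hf.inner_toLp_eq_integral_mul hg, ← hf.norm_toLp_eq_sqrt_integral_sq,
    ← hg.norm_toLp_eq_sqrt_integral_sq]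
  exact abs_real_inner_le_norm _ _

end L2

section Slices

variable {α β : Type*} [MeasurableSpace α] [MeasurableSpace β]
  {μ : Measure α} {ν : Measure β} [SFinite μ] [SFinite ν] {h : α → β → ℝ}

lemma ae_memLp_slice (hh : MemLp (fun p : α × β => h p.1 p.2) 2 (μ.prod ν)) :
    ∀ᵐ t ∂ν, MemLp (fun x => h x t) 2 μ := by
  have hsq := (memLp_two_iff_integrable_sq hh.aestronglyMeasurable).1 hh
  filter_upwards [hsq.prod_left_ae, hh.aestronglyMeasurable.prodMk_right] with t hint hmeas
  exact (memLp_two_iff_integrable_sq hmeas).2 hint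

lemma memLp_sqrt_integral_sq_slice (hh : MemLp (fun p : α × β => h p.1 p.2) 2 (μ.prod ν)) :
    MemLp (fun t => √(∫ x, h x t ^ 2 ∂μ)) 2 ν := by
  have hint : Integrable (fun t => ∫ x, h x t ^ 2 ∂μ) ν :=
    ((memLp_two_iff_integrable_sq hh.aestronglyMeasurable).1 hh).integral_prod_right
  refine (memLp_two_iff_integrable_sq
    (Real.continuous_sqrt.comp_aestronglyMeasurable hint.aestronglyMeasurable)).2 ?_
  refine hint.congr (Eventually.of_forall fun t => ?_)
  exact (Real.sq_sqrt (integral_nonneg fun x => sq_nonneg _)).symm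

lemma integral_sqrt_integral_sq_slice_le [IsFiniteMeasure ν]
    (hh : MemLp (fun p : α × β => h p.1 p.2) 2 (μ.prod ν)) :
    ∫ t, √(∫ x, h x t ^ 2 ∂μ) ∂ν ≤
      √(ν.real univ) * √(∫ p, h p.1 p.2 ^ 2 ∂(μ.prod ν)) := by
  have hN := memLp_sqrt_integral_sq_slice hh
  have hsq : ∫ t, √(∫ x, h x t ^ 2 ∂μ) ^ 2 ∂ν = ∫ p, h p.1 p.2 ^ 2 ∂(μ.prod ν) := by
    rw [integral_prod_symm _ ((memLp_two_iff_integrable_sq hh.aestronglyMeasurable).1 hh)]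
    simp only [Real.sq_sqrt (integral_nonneg fun _ => sq_nonneg _)]
  calc ∫ t, √(∫ x, h x t ^ 2 ∂μ) ∂ν = ∫ t, √(∫ x, h x t ^ 2 ∂μ) * 1 ∂ν := by simp
    _ ≤ |∫ t, √(∫ x, h x t ^ 2 ∂μ) * 1 ∂ν| := le_abs_self _
    _ ≤ _ := abs_integral_mul_le_sqrt_mul_sqrt hN (memLp_const 1)
    _ = _ := by simp [hsq, mul_comm]

lemma integrable_integral_mul_slice [IsFiniteMeasure ν]
    (hh : MemLp (fun p : α × β => h p.1 p.2) 2 (μ.prod ν)) {φ : α → ℝ} (hφ : MemLp φ 2 μ) :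
    Integrable (fun t => ∫ x, h x t * φ x ∂μ) ν :=
  (hh.integrable_mul (hφ.comp_fst ν)).integral_prod_right

end Slices

end MeasureTheory

lemma Real.exp_sub_exp_le_mul_exp (x y : ℝ) :
    Real.exp y - Real.exp x ≤ (y - x) * Real.exp y := by
  have h := Real.add_one_le_exp (x - y)
  have hx : Real.exp x = Real.exp (x - y) * Real.exp y := by rw [← Real.exp_add, sub_add_cancel]
  nlinarith [Real.exp_pos y]

open Real in
lemma integral_mul_exp_sub_integral_mul_exp_le {α : Type*} [MeasurableSpace α] {μ : Measure α}
    {f φ₁ φ₂ : α → ℝ} (hf : MemLp f 2 μ) (hφ₁ : MemLp φ₁ 2 μ) (hφ₂ : MemLp φ₂ 2 μ)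
    (hφ₂n : √(∫ x, φ₂ x ^ 2 ∂μ) ≤ 1) {l₁ l₂ t T : ℝ} (hl₂ : 0 ≤ l₂) (hl : l₁ ≤ l₂)
    (ht₀ : 0 ≤ t) (htT : t ≤ T) :
    (∫ x, f x * φ₂ x ∂μ) * exp (l₂ * t) - (∫ x, f x * φ₁ x ∂μ) * exp (l₁ * t) ≤
      exp (l₂ * T) * (T * (l₂ - l₁) + √(∫ x, (φ₂ x - φ₁ x) ^ 2 ∂μ)) * √(∫ x, f x ^ 2 ∂μ) := by
  set A := ∫ x, f x * φ₂ x ∂μ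
  set B := ∫ x, f x * φ₁ x ∂μ
  set N := √(∫ x, f x ^ 2 ∂μ)
  set D := √(∫ x, (φ₂ x - φ₁ x) ^ 2 ∂μ)
  have hN : 0 ≤ N := sqrt_nonneg _
  have hA : |A| ≤ N := (abs_integral_mul_le_sqrt_mul_sqrt hf hφ₂).trans
    (mul_le_of_le_one_right hN hφ₂n)
  have hAB : |A - B| ≤ N * D := by
    have hsub : A - B = ∫ x, f x * (φ₂ x - φ₁ x) ∂μ := by
      simp only [mul_sub]
      exact (integral_sub (hf.integrable_mul hφ₂) (hf.integrable_mul hφ₁)).symm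
    rw [hsub]
    exact abs_integral_mul_le_sqrt_mul_sqrt hf (hφ₂.sub hφ₁)
  have he₁ : exp (l₁ * t) ≤ exp (l₂ * T) := exp_le_exp.2 (by nlinarith)
  have hgap₀ : 0 ≤ exp (l₂ * t) - exp (l₁ * t) := sub_nonneg.2 (exp_le_exp.2 (by nlinarith))
  have hgap : exp (l₂ * t) - exp (l₁ * t) ≤ T * (l₂ - l₁) * exp (l₂ * T) :=
    (exp_sub_exp_le_mul_exp _ _).trans
      (mul_le_mul (by nlinarith) (exp_le_exp.2 (by nlinarith)) (exp_pos _).le (by nlinarith))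
  calc A * exp (l₂ * t) - B * exp (l₁ * t)
      = A * (exp (l₂ * t) - exp (l₁ * t)) + (A - B) * exp (l₁ * t) := by ring
    _ ≤ N * (T * (l₂ - l₁) * exp (l₂ * T)) + N * D * exp (l₂ * T) := by
      gcongr
      · exact (le_abs_self A).trans hA
      · exact (le_abs_self _).trans hAB
    _ = exp (l₂ * T) * (T * (l₂ - l₁) + D) * N := by ring

theorem stmt13_general (a b T lam₁ lam₂ : ℝ)
    (hT : 0 < T)
    (hl1 : 0 < lam₁) (hl12 : lam₁ < lam₂)
    (φ₁ φ₂ : ℝ → ℝ) (h : ℝ → ℝ → ℝ)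
    (hφ₁ : MemLp φ₁ 2 (volume.restrict (Ioo a b)))
    (hφ₂ : MemLp φ₂ 2 (volume.restrict (Ioo a b)))
    (hφ₂n : Real.sqrt (∫ x in Ioo a b, (φ₂ x) ^ 2) ≤ 1)
    (hh : MemLp (fun p : ℝ × ℝ => h p.1 p.2) 2
      (volume.restrict (Ioo a b ×ˢ Ioo 0 T)))
    (hm1 : (∫ t in Ioo (0 : ℝ) T,
      (∫ x in Ioo a b, h x t * φ₁ x) * Real.exp (lam₁ * t)) = 0)
    (hm2 : (∫ t in Ioo (0 : ℝ) T,
      (∫ x in Ioo a b, h x t * φ₂ x) * Real.exp (lam₂ * t)) = 1) :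
    Real.exp (-lam₂ * T) /
        (Real.sqrt T *
          (T * (lam₂ - lam₁) + Real.sqrt (∫ x in Ioo a b, (φ₂ x - φ₁ x) ^ 2))) ≤
      Real.sqrt (∫ p in Ioo a b ×ˢ Ioo (0 : ℝ) T, (h p.1 p.2) ^ 2) := by
  set μ := volume.restrict (Ioo a b)
  set ν := volume.restrict (Ioo (0 : ℝ) T)
  have hprod : volume.restrict (Ioo a b ×ˢ Ioo (0 : ℝ) T) = μ.prod ν := by
    rw [Measure.prod_restrict, ← Measure.volume_eq_prod]
  rw [hprod] at hh ⊢
  have hνT : ν.real univ = T := by simp [ν, hT.le]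
  set D := √(∫ x, (φ₂ x - φ₁ x) ^ 2 ∂μ)
  set C := Real.exp (lam₂ * T) * (T * (lam₂ - lam₁) + D)
  have hgap : 0 < T * (lam₂ - lam₁) + D :=
    add_pos_of_pos_of_nonneg (mul_pos hT (sub_pos.2 hl12)) (Real.sqrt_nonneg _)
  have hmoment_integrable (φ : ℝ → ℝ) (hφ : MemLp φ 2 μ) (l : ℝ) :
      Integrable (fun t => (∫ x, h x t * φ x ∂μ) * Real.exp (l * t)) ν :=
    IntegrableOn.mul_continuousOn_of_subset (integrable_integral_mul_slice hh hφ)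
      (by fun_prop) measurableSet_Ioo isCompact_Icc Ioo_subset_Icc_self
  have hone : 1 ≤ C * ∫ t, √(∫ x, h x t ^ 2 ∂μ) ∂ν := by
    have hint₁ := hmoment_integrable φ₁ hφ₁ lam₁
    have hint₂ := hmoment_integrable φ₂ hφ₂ lam₂
    calc 1 = ∫ t, ((∫ x, h x t * φ₂ x ∂μ) * Real.exp (lam₂ * t) -
            (∫ x, h x t * φ₁ x ∂μ) * Real.exp (lam₁ * t)) ∂ν := by
          rw [integral_sub hint₂ hint₁, hm2, hm1, sub_zero]
      _ ≤ ∫ t, C * √(∫ x, h x t ^ 2 ∂μ) ∂ν := by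
          refine integral_mono_ae (hint₂.sub hint₁)
            (((memLp_sqrt_integral_sq_slice hh).integrable one_le_two).const_mul C) ?_
          filter_upwards [ae_memLp_slice hh, ae_restrict_mem measurableSet_Ioo] with t hslice ht
          exact integral_mul_exp_sub_integral_mul_exp_le hslice hφ₁ hφ₂ hφ₂n (by linarith)
            hl12.le ht.1.le ht.2.le
      _ = C * ∫ t, √(∫ x, h x t ^ 2 ∂μ) ∂ν := integral_const_mul _ _
  have hslices := integral_sqrt_integral_sq_slice_le hh
  rw [hνT] at hslices
  rw [div_le_iff₀ (by positivity), neg_mul, Real.exp_neg,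
    inv_le_iff_one_le_mul₀ (Real.exp_pos _)]
  calc 1 ≤ C * (√T * √(∫ p, h p.1 p.2 ^ 2 ∂(μ.prod ν))) :=
        hone.trans (mul_le_mul_of_nonneg_left hslices (by positivity))
    _ = _ := by ring

/-- Quantitative lower bound for the control norm from the
moment relations: if `0 < a < b < 1`, `T > 0`, `0 < λ₁ < λ₂`, `φ₁, φ₂ ∈ L²(a,b)`
with `‖φ₂‖_{L²(a,b)} ≤ 1`, `h ∈ L²((a,b)×(0,T))`, and the Fourier coefficients
`h_i(t) = ∫_a^b h(x,t) φ_i(x) dx` satisfy `∫_0^T h₁(t) e^{λ₁ t} dt = 0` and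
`∫_0^T h₂(t) e^{λ₂ t} dt = 1`, then
`‖h‖ ≥ e^{-λ₂ T} / (√T (T(λ₂-λ₁) + ‖φ₂-φ₁‖_{L²(a,b)}))`. -/
theorem stmt13 (a b T lam₁ lam₂ : ℝ)
    (ha : 0 < a) (hab : a < b) (hb : b < 1) (hT : 0 < T)
    (hl1 : 0 < lam₁) (hl12 : lam₁ < lam₂)
    (φ₁ φ₂ : ℝ → ℝ) (h : ℝ → ℝ → ℝ)
    (hφ₁ : MemLp φ₁ 2 (volume.restrict (Ioo a b)))
    (hφ₂ : MemLp φ₂ 2 (volume.restrict (Ioo a b)))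
    (hφ₂n : Real.sqrt (∫ x in Ioo a b, (φ₂ x) ^ 2) ≤ 1)
    (hh : MemLp (fun p : ℝ × ℝ => h p.1 p.2) 2
      (volume.restrict (Ioo a b ×ˢ Ioo 0 T)))
    (hm1 : (∫ t in Ioo (0 : ℝ) T,
      (∫ x in Ioo a b, h x t * φ₁ x) * Real.exp (lam₁ * t)) = 0)
    (hm2 : (∫ t in Ioo (0 : ℝ) T,
      (∫ x in Ioo a b, h x t * φ₂ x) * Real.exp (lam₂ * t)) = 1) :
    Real.exp (-lam₂ * T) /
        (Real.sqrt T *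
          (T * (lam₂ - lam₁) + Real.sqrt (∫ x in Ioo a b, (φ₂ x - φ₁ x) ^ 2))) ≤
      Real.sqrt (∫ p in Ioo a b ×ˢ Ioo (0 : ℝ) T, (h p.1 p.2) ^ 2) :=
  stmt13_general a b T lam₁ lam₂ hT hl1 hl12 φ₁ φ₂ h hφ₁ hφ₂ hφ₂n hh hm1 hm2
end

section
/- Let K₀(x) = ∫_0^{+∞} e^{-x cosh v} dv for x > 0. Then: (a) for every x ∈ (0,1], K₀(x) ≥ -(ln x)/e + 1/(2e); (b) for every x ≥ 1, K₀(x) ≥ e^{-x}/(2x); (c) for every x ∈ (0,2], K₀(x) ≤ -ln(x/2) + 1/e; (d) for every x ≥ 2, K₀(x) ≤ (2/x) e^{-x/2}. -/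
/-!
Since `e^v / 2 ≤ cosh v ≤ e^v` for `v ≥ 0`, the substitution `w = v + log c` in
`∫_0^∞ e^{-c e^v} dv` gives `F(log x) ≤ K₀(x) ≤ F(log (x/2))`, where
`F(X) = ∫_X^∞ e^{-e^w} dw`. The integrand of `F` is antitone, so for `X ≤ Y`, `F X - F Y` is
squeezed between `(Y - X) e^{-e^Y}` and `(Y - X) e^{-e^X}`; this handles small `x`, splitting at
`X = 0`. On the tail, with `x = e^X` and `t = e^w ≥ x`, the integrand `e^{-t}` lies between
`(e^x / x) t e^{-2t}` (when `x ≥ 1`) and `(t / x) e^{-t}`, whose integrals in `w` are explicit;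
this gives the bounds for large `x` and the values `1/(2e) ≤ F 0 ≤ 1/e`.
-/

open MeasureTheory Set Filter

noncomputable def besselK0 (x : ℝ) : ℝ := ∫ v in Ioi (0 : ℝ), Real.exp (-(x * Real.cosh v))

open Real

lemma Real.cosh_le_exp {v : ℝ} (hv : 0 ≤ v) : cosh v ≤ exp v := by
  rw [cosh_eq]
  nlinarith [exp_le_exp.2 (neg_le_self hv)]

lemma Real.exp_div_two_le_cosh (v : ℝ) : exp v / 2 ≤ cosh v := by
  rw [cosh_eq]
  linarith [exp_pos (-v)]

theorem integral_comp_add_right_Ioi {E : Type*} [NormedAddCommGroup E] [NormedSpace ℝ E]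
    (g : ℝ → E) (a b : ℝ) : ∫ v in Ioi b, g (v + a) = ∫ w in Ioi (b + a), g w := by
  rw [← integral_indicator measurableSet_Ioi, ← integral_indicator measurableSet_Ioi,
    ← integral_add_right_eq_self (indicator (Ioi (b + a)) g) a]
  congr 1
  ext v
  simp only [indicator, mem_Ioi, add_lt_add_iff_right]

lemma integrableOn_exp_mul_exp_neg_mul_exp {b : ℝ} (hb : 0 < b) (X : ℝ) :
    IntegrableOn (fun w => exp w * exp (-(b * exp w))) (Ioi X) := by
  have := (integrableOn_comp_exp_Ioi (fun y => exp (-b * y)) X).2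
    (integrableOn_exp_mul_Ioi (neg_lt_zero.2 hb) _)
  simpa only [smul_eq_mul, neg_mul] using this

lemma integral_exp_mul_exp_neg_mul_exp {b : ℝ} (hb : 0 < b) (X : ℝ) :
    ∫ w in Ioi X, exp w * exp (-(b * exp w)) = exp (-(b * exp X)) / b := by
  have := integral_comp_exp_Ioi (fun y => exp (-b * y)) X
  simp only [smul_eq_mul] at this
  rw [integral_exp_mul_Ioi (neg_lt_zero.2 hb)] at this
  simpa only [neg_mul, neg_div_neg_eq] using this

noncomputable def expNegExpTail (X : ℝ) : ℝ := ∫ w in Ioi X, exp (-exp w)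

lemma integrableOn_exp_neg_exp (X : ℝ) : IntegrableOn (fun w => exp (-exp w)) (Ioi X) := by
  refine (exp_neg_integrableOn_Ioi X one_pos).mono'
    (continuous_exp.comp continuous_exp.neg).aestronglyMeasurable (Eventually.of_forall ?_)
  intro w
  rw [norm_of_nonneg (exp_pos _).le, exp_le_exp]
  linarith [add_one_le_exp w]

lemma expNegExpTail_eq_intervalIntegral_add (X Y : ℝ) :
    expNegExpTail X = (∫ w in X..Y, exp (-exp w)) + expNegExpTail Y :=
  (intervalIntegral.integral_interval_add_Ioi (integrableOn_exp_neg_exp X)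
    (integrableOn_exp_neg_exp Y)).symm

lemma sub_mul_exp_neg_exp_add_le_expNegExpTail {X Y : ℝ} (hXY : X ≤ Y) :
    (Y - X) * exp (-exp Y) + expNegExpTail Y ≤ expNegExpTail X := by
  rw [expNegExpTail_eq_intervalIntegral_add X Y, ← smul_eq_mul,
    ← intervalIntegral.integral_const]
  gcongr
  refine intervalIntegral.integral_mono_on hXY intervalIntegrable_const
    (Continuous.intervalIntegrable (by fun_prop) X Y) fun w hw => ?_
  gcongr
  exact hw.2

lemma expNegExpTail_le_sub_mul_exp_neg_exp_add {X Y : ℝ} (hXY : X ≤ Y) :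
    expNegExpTail X ≤ (Y - X) * exp (-exp X) + expNegExpTail Y := by
  rw [expNegExpTail_eq_intervalIntegral_add X Y, ← smul_eq_mul,
    ← intervalIntegral.integral_const]
  gcongr
  refine intervalIntegral.integral_mono_on hXY
    (Continuous.intervalIntegrable (by fun_prop) X Y) intervalIntegrable_const fun w hw => ?_
  gcongr
  exact hw.1

lemma expNegExpTail_le_exp_neg_exp_div (X : ℝ) : expNegExpTail X ≤ exp (-exp X) / exp X := by
  have hint := (integrableOn_exp_mul_exp_neg_mul_exp one_pos X).const_mul (exp X)⁻¹
  have heq := integral_exp_mul_exp_neg_mul_exp one_pos X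
  simp only [one_mul, div_one] at hint heq
  calc expNegExpTail X ≤ ∫ w in Ioi X, (exp X)⁻¹ * (exp w * exp (-exp w)) := by
        refine setIntegral_mono_on (integrableOn_exp_neg_exp X) hint measurableSet_Ioi
          fun w hw => ?_
        have : 1 ≤ (exp X)⁻¹ * exp w := by
          rw [inv_mul_eq_div, one_le_div (exp_pos X)]; exact exp_le_exp.2 (le_of_lt hw)
        rw [← mul_assoc]
        exact le_mul_of_one_le_left (exp_pos _).le this
    _ = exp (-exp X) / exp X := by rw [integral_const_mul, heq, inv_mul_eq_div]

lemma exp_neg_exp_div_two_mul_exp_le_expNegExpTail {X : ℝ} (hX : 0 ≤ X) :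
    exp (-exp X) / (2 * exp X) ≤ expNegExpTail X := by
  set x := exp X with hxX
  have hx : 1 ≤ x := one_le_exp hX
  have hint := (integrableOn_exp_mul_exp_neg_mul_exp two_pos X).const_mul (exp x / x)
  calc exp (-x) / (2 * x)
      = ∫ w in Ioi X, exp x / x * (exp w * exp (-(2 * exp w))) := by
        rw [integral_const_mul, integral_exp_mul_exp_neg_mul_exp two_pos X,
          ← hxX, show -x = x + -(2 * x) by ring, exp_add]
        field_simp
    _ ≤ expNegExpTail X := by
        refine setIntegral_mono_on hint (integrableOn_exp_neg_exp X) measurableSet_Ioi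
          fun w hw => ?_
        set t := exp w
        have hxt : x ≤ t := exp_le_exp.2 (le_of_lt hw)
        have key : t ≤ x * exp (t - x) := by nlinarith [add_one_le_exp (t - x)]
        calc exp x / x * (t * exp (-(2 * t))) = t / (x * exp (t - x)) * exp (-t) := by
              rw [exp_sub, exp_neg, exp_neg, two_mul, exp_add]
              field_simp
          _ ≤ 1 * exp (-t) := by
              gcongr
              rwa [div_le_one (by positivity)]
          _ = exp (-t) := one_mul _

lemma integral_exp_neg_mul_exp {c : ℝ} (hc : 0 < c) :
    ∫ v in Ioi 0, exp (-(c * exp v)) = expNegExpTail (log c) := by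
  have hshift (v : ℝ) : c * exp v = exp (v + log c) := by rw [exp_add, exp_log hc, mul_comm]
  simp only [hshift, integral_comp_add_right_Ioi (fun w => exp (-exp w)), zero_add]
  rfl

lemma integrableOn_exp_neg_mul_exp {c : ℝ} (hc : 0 < c) :
    IntegrableOn (fun v => exp (-(c * exp v))) (Ioi 0) := by
  refine (exp_neg_integrableOn_Ioi 0 hc).mono'
    (continuous_exp.comp (continuous_const.mul continuous_exp).neg).aestronglyMeasurable
    (Eventually.of_forall fun v => ?_)
  rw [norm_of_nonneg (exp_pos _).le, exp_le_exp]
  nlinarith [add_one_le_exp v]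

lemma integrableOn_besselK0 {x : ℝ} (hx : 0 < x) :
    IntegrableOn (fun v => exp (-(x * cosh v))) (Ioi 0) := by
  refine (integrableOn_exp_neg_mul_exp (half_pos hx)).mono'
    (continuous_exp.comp (continuous_const.mul continuous_cosh).neg).aestronglyMeasurable
    (Eventually.of_forall fun v => ?_)
  rw [norm_of_nonneg (exp_pos _).le, exp_le_exp]
  nlinarith [exp_div_two_le_cosh v]

lemma expNegExpTail_log_le_besselK0 {x : ℝ} (hx : 0 < x) :
    expNegExpTail (log x) ≤ besselK0 x := by
  rw [← integral_exp_neg_mul_exp hx]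
  refine setIntegral_mono_on (integrableOn_exp_neg_mul_exp hx) (integrableOn_besselK0 hx)
    measurableSet_Ioi fun v hv => ?_
  gcongr
  exact cosh_le_exp (le_of_lt hv)

lemma besselK0_le_expNegExpTail_log_half {x : ℝ} (hx : 0 < x) :
    besselK0 x ≤ expNegExpTail (log (x / 2)) := by
  rw [← integral_exp_neg_mul_exp (half_pos hx)]
  refine setIntegral_mono_on (integrableOn_besselK0 hx)
    (integrableOn_exp_neg_mul_exp (half_pos hx)) measurableSet_Ioi fun v _ => ?_
  exact exp_le_exp.2 (by nlinarith [exp_div_two_le_cosh v])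

/-- Explicit bounds for `K₀`:
(a) for `x ∈ (0,1]`, `K₀(x) ≥ -(ln x)/e + 1/(2e)`;
(b) for `x ≥ 1`, `K₀(x) ≥ e^{-x}/(2x)`;
(c) for `x ∈ (0,2]`, `K₀(x) ≤ -ln(x/2) + 1/e`;
(d) for `x ≥ 2`, `K₀(x) ≤ (2/x) e^{-x/2}`. -/
theorem stmt16 :
    (∀ x : ℝ, 0 < x → x ≤ 1 →
      -(Real.log x) / Real.exp 1 + 1 / (2 * Real.exp 1) ≤ besselK0 x) ∧
    (∀ x : ℝ, 1 ≤ x → Real.exp (-x) / (2 * x) ≤ besselK0 x) ∧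
    (∀ x : ℝ, 0 < x → x ≤ 2 →
      besselK0 x ≤ -(Real.log (x / 2)) + 1 / Real.exp 1) ∧
    (∀ x : ℝ, 2 ≤ x → besselK0 x ≤ (2 / x) * Real.exp (-x / 2)) := by
  have lower_zero : 1 / (2 * exp 1) ≤ expNegExpTail 0 := by
    simpa [exp_neg, div_eq_mul_inv, mul_comm] using
      exp_neg_exp_div_two_mul_exp_le_expNegExpTail le_rfl
  have upper_zero : expNegExpTail 0 ≤ 1 / exp 1 := by
    simpa [exp_neg] using expNegExpTail_le_exp_neg_exp_div 0
  refine ⟨fun x hx0 hx1 => ?_, fun x hx => ?_, fun x hx0 hx2 => ?_, fun x hx => ?_⟩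
  · calc -log x / exp 1 + 1 / (2 * exp 1) ≤ (0 - log x) * exp (-exp 0) + expNegExpTail 0 := by
          rw [exp_zero, exp_neg, zero_sub, div_eq_mul_inv]
          linarith
      _ ≤ expNegExpTail (log x) :=
          sub_mul_exp_neg_exp_add_le_expNegExpTail (log_nonpos hx0.le hx1)
      _ ≤ besselK0 x := expNegExpTail_log_le_besselK0 hx0
  · have hx0 : 0 < x := by linarith
    calc exp (-x) / (2 * x) = exp (-exp (log x)) / (2 * exp (log x)) := by rw [exp_log hx0]
      _ ≤ expNegExpTail (log x) :=
          exp_neg_exp_div_two_mul_exp_le_expNegExpTail (log_nonneg hx)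
      _ ≤ besselK0 x := expNegExpTail_log_le_besselK0 hx0
  · have hlog : log (x / 2) ≤ 0 := log_nonpos (by positivity) (by linarith)
    calc besselK0 x ≤ expNegExpTail (log (x / 2)) := besselK0_le_expNegExpTail_log_half hx0
      _ ≤ (0 - log (x / 2)) * exp (-exp (log (x / 2))) + expNegExpTail 0 :=
          expNegExpTail_le_sub_mul_exp_neg_exp_add hlog
      _ ≤ -log (x / 2) + 1 / exp 1 := by
          have : exp (-exp (log (x / 2))) ≤ 1 := exp_le_one_iff.2 (neg_nonpos.2 (exp_pos _).le)
          nlinarith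
  · have hx0 : 0 < x := by linarith
    calc besselK0 x ≤ expNegExpTail (log (x / 2)) := besselK0_le_expNegExpTail_log_half hx0
      _ ≤ exp (-exp (log (x / 2))) / exp (log (x / 2)) := expNegExpTail_le_exp_neg_exp_div _
      _ = 2 / x * exp (-x / 2) := by
          rw [exp_log (by positivity), neg_div]
          field_simp
end
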